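/- arXiv:2402.09824 — 9 statements merged into one kernel-verified Lean document; each statement's English description precedes it below -/
import Mathlib

section
/- Fix q ∈ (0,1) and δ > 0, and let f(x) = x·(1 + δ·q·(1−x)) / (1 + δ·x·(1−x)). Then for every initial condition x ∈ (0,1), the sequence of iterates fⁿ(x) converges to q as n → ∞. -/
open Filter Set Topology

/-!
Writing `f` for the map, `f x - q = (x - q) / (1 + δ x (1 - x))` with a denominator at least
`1`, so `f x` lies between `x` and `q`: for an initial point `x₀` the interval `[[x₀, q]]` is
invariant. On that interval `x (1 - x)` is concave, hence bounded below by its value `c > 0` at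
one of the endpoints, so `f` contracts the distance to `q` by the factor `(1 + δ c)⁻¹ < 1` and
the iterates converge geometrically to `q`.
-/

section Contraction

variable {α : Type*} [PseudoMetricSpace α] {g : α → α} {s : Set α} {p : α} {r : ℝ}

theorem dist_iterate_le_pow_mul (hr : 0 ≤ r) (hs : MapsTo g s s)
    (hg : ∀ y ∈ s, dist (g y) p ≤ r * dist y p) {x : α} (hx : x ∈ s) (n : ℕ) :
    dist (g^[n] x) p ≤ r ^ n * dist x p := by
  induction n with
  | zero => simp
  | succ n ih =>
    rw [Function.iterate_succ_apply', pow_succ', mul_assoc]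
    exact (hg _ (hs.iterate n hx)).trans (mul_le_mul_of_nonneg_left ih hr)

theorem tendsto_iterate_of_dist_le_mul (hr₀ : 0 ≤ r) (hr₁ : r < 1) (hs : MapsTo g s s)
    (hg : ∀ y ∈ s, dist (g y) p ≤ r * dist y p) {x : α} (hx : x ∈ s) :
    Tendsto (fun n ↦ g^[n] x) atTop (𝓝 p) := by
  refine tendsto_iff_dist_tendsto_zero.2 <|
    squeeze_zero (fun _ ↦ dist_nonneg) (dist_iterate_le_pow_mul hr₀ hs hg hx) ?_
  simpa using (tendsto_pow_atTop_nhds_zero_of_lt_one hr₀ hr₁).mul_const (dist x p)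

end Contraction

theorem min_mul_one_sub_le_of_mem_uIcc {a b y : ℝ} (hy : y ∈ uIcc a b) :
    min (a * (1 - a)) (b * (1 - b)) ≤ y * (1 - y) := by
  wlog hab : a ≤ b generalizing a b
  · rw [min_comm]
    exact this (uIcc_comm a b ▸ hy) (le_of_not_ge hab)
  rw [uIcc_of_le hab] at hy
  obtain ⟨hay, hyb⟩ := hy
  rcases le_total (a + y) 1 with h | h
  · exact (min_le_left _ _).trans (by nlinarith)
  · exact (min_le_right _ _).trans (by nlinarith)

noncomputable def replicatorMap (δ q x : ℝ) : ℝ :=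
  x * (1 + δ * q * (1 - x)) / (1 + δ * x * (1 - x))

namespace replicatorMap

variable {δ q x : ℝ}

theorem one_le_denom (hδ : 0 ≤ δ) (hx : 0 ≤ x * (1 - x)) : 1 ≤ 1 + δ * x * (1 - x) := by
  rw [mul_assoc]
  exact le_add_of_nonneg_right (mul_nonneg hδ hx)

theorem sub_eq_div (hx : 1 + δ * x * (1 - x) ≠ 0) :
    replicatorMap δ q x - q = (x - q) / (1 + δ * x * (1 - x)) := by
  rw [replicatorMap, eq_div_iff hx, sub_mul, div_mul_cancel₀ _ hx]
  ring

theorem mem_uIcc (hδ : 0 ≤ δ) (hx : 0 ≤ x * (1 - x)) : replicatorMap δ q x ∈ uIcc x q := by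
  have hD := one_le_denom hδ hx
  have ht : (1 + δ * x * (1 - x))⁻¹ ∈ Icc (0 : ℝ) 1 := ⟨by positivity, inv_le_one_of_one_le₀ hD⟩
  rw [uIcc_comm, ← segment_eq_uIcc, ← sub_add_cancel (replicatorMap δ q x) q,
    sub_eq_div (by positivity), div_eq_inv_mul]
  simpa [AffineMap.lineMap_apply_module', add_comm] using lineMap_mem_segment ℝ q x ht

theorem dist_le {c : ℝ} (hδ : 0 ≤ δ) (hc : 0 ≤ c) (hcx : c ≤ x * (1 - x)) :
    dist (replicatorMap δ q x) q ≤ (1 + δ * c)⁻¹ * dist x q := by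
  have hD : 1 + δ * c ≤ 1 + δ * x * (1 - x) := by
    rw [mul_assoc]
    exact add_le_add_right (mul_le_mul_of_nonneg_left hcx hδ) 1
  have hD₀ : 0 < 1 + δ * x * (1 - x) := by linarith [mul_nonneg hδ hc]
  rw [Real.dist_eq, Real.dist_eq, sub_eq_div hD₀.ne', abs_div, abs_of_pos hD₀, div_eq_inv_mul]
  gcongr

end replicatorMap

/-- Fix `q ∈ (0,1)` and `δ > 0`, and let
`f x = x * (1 + δ*q*(1-x)) / (1 + δ*x*(1-x))`.
Then for every initial condition `x ∈ (0,1)`, the sequence of iterates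
`f^[n] x` converges to `q` as `n → ∞`. -/
theorem bio_global_convergence (q δ : ℝ) (hq : q ∈ Set.Ioo (0:ℝ) 1) (hδ : 0 < δ)
    (f : ℝ → ℝ)
    (hf : ∀ x : ℝ, f x = x * (1 + δ * q * (1 - x)) / (1 + δ * x * (1 - x))) :
    ∀ x ∈ Set.Ioo (0:ℝ) 1,
      Tendsto (fun n : ℕ => f^[n] x) atTop (nhds q) := by
  obtain rfl : f = replicatorMap δ q := funext hf
  intro x hx
  have hpos : ∀ y ∈ Ioo (0 : ℝ) 1, 0 < y * (1 - y) := fun y hy ↦ mul_pos hy.1 (sub_pos.2 hy.2)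
  have hsub : uIcc x q ⊆ Ioo 0 1 := ordConnected_Ioo.uIcc_subset hx hq
  set c := min (x * (1 - x)) (q * (1 - q))
  have hc : 0 < c := lt_min (hpos x hx) (hpos q hq)
  refine tendsto_iterate_of_dist_le_mul (s := uIcc x q) (by positivity)
    (inv_lt_one_of_one_lt₀ (lt_add_of_pos_right 1 (mul_pos hδ hc))) ?_ ?_ left_mem_uIcc
  · intro y hy
    exact uIcc_subset_uIcc hy right_mem_uIcc
      (replicatorMap.mem_uIcc hδ.le (hpos y (hsub hy)).le)
  · intro y hy
    exact replicatorMap.dist_le hδ.le hc.le (min_mul_one_sub_le_of_mem_uIcc hy)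
end

section
/- Fix q ∈ (0,1) and δ > 0, and let g(x) = x·(1 − δ·(1−x)·(x−q)). Then g maps [0,1] into [0,1] if and only if δ ≤ δ* := min{4/q², 4/(1−q)²}. -/
/-- Fix `q ∈ (0,1)` and `δ > 0`, and let `g x = x * (1 − δ*(1−x)*(x−q))`.
Then `g` maps `[0,1]` into `[0,1]` if and only if
`δ ≤ δ* := min {4/q², 4/(1−q)²}`. -/
theorem ppi_mapsTo_iff (q δ : ℝ) (hq : q ∈ Set.Ioo (0:ℝ) 1) (hδ : 0 < δ)
    (g : ℝ → ℝ)
    (hg : ∀ x : ℝ, g x = x * (1 - δ * (1 - x) * (x - q))) :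
    Set.MapsTo g (Set.Icc (0:ℝ) 1) (Set.Icc (0:ℝ) 1) ↔
      δ ≤ min (4 / q ^ 2) (4 / (1 - q) ^ 2) := by
  obtain ⟨hq0, hq1⟩ := hq
  constructor
  · intro h
    have h1 := h (show (1 + q) / 2 ∈ Set.Icc (0:ℝ) 1 by
      constructor <;> nlinarith)
    have h2 := h (show q / 2 ∈ Set.Icc (0:ℝ) 1 by
      constructor <;> nlinarith)
    rw [Set.mem_Icc, hg] at h1 h2
    rw [le_min_iff, le_div_iff₀ (by positivity), le_div_iff₀ (pow_pos (by linarith) 2)]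
    constructor
    · nlinarith [h2.2, hq0, hq1]
    · nlinarith [h1.1, hq0, hq1]
  · intro hm x hx
    rw [le_min_iff, le_div_iff₀ (by positivity), le_div_iff₀ (pow_pos (by linarith) 2)] at hm
    obtain ⟨hB, hA⟩ := hm
    rw [Set.mem_Icc, hg]
    obtain ⟨hx0, hx1⟩ := hx
    have key1 : δ * (1 - x) * (x - q) ≤ 1 := by
      nlinarith [mul_nonneg hδ.le (sq_nonneg (1 - 2*x + q))]
    have key2 : δ * x * (q - x) ≤ 1 := by
      nlinarith [mul_nonneg hδ.le (sq_nonneg (q - 2*x))]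
    constructor
    · exact mul_nonneg hx0 (by linarith)
    · nlinarith [mul_nonneg (by linarith : (0:ℝ) ≤ 1 - x) (by linarith : (0:ℝ) ≤ 1 - δ * x * (q - x))]
end

section
/- Fix q ∈ (0,1) and let g(x) = x·(1 − δ·(1−x)·(x−q)). If δ > 3/(1 − q + q²), then g has negative Schwarzian derivative on [0,1]; equivalently, 2·g'(x)·g'''(x) − 3·(g''(x))² < 0 for every x ∈ [0,1]. -/
/-!
For a cubic `g x = a x³ + b x² + c x + d` one has `2 g' g''' - 3 g''² = -2 g''² - 4 (b² - 3ac)`,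
so this is negative on all of `ℝ` as soon as `g'` has two distinct real roots, i.e. `b² > 3ac`.
For the imitation map `b² - 3ac = δ (δ (1 - q + q²) - 3)`, which is positive exactly when
`δ > 3 / (1 - q + q²)`.
-/

/-- `2 g'² · Sg`, where `Sg` is the Schwarzian derivative of `g`. -/
noncomputable def schwarzianNumerator (g : ℝ → ℝ) (x : ℝ) : ℝ :=
  2 * deriv g x * iteratedDeriv 3 g x - 3 * (iteratedDeriv 2 g x) ^ 2

section Cubic

variable (a b c d : ℝ)

lemma deriv_cubic :
    deriv (fun x : ℝ => a * x ^ 3 + b * x ^ 2 + c * x + d) =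
      fun x => 3 * a * x ^ 2 + 2 * b * x + c := by
  funext x
  have h := ((((hasDerivAt_pow 3 x).const_mul a).fun_add ((hasDerivAt_pow 2 x).const_mul b)).fun_add
    ((hasDerivAt_id' x).const_mul c)).add_const d
  rw [h.deriv]
  norm_num
  ring

lemma iteratedDeriv_two_cubic :
    iteratedDeriv 2 (fun x : ℝ => a * x ^ 3 + b * x ^ 2 + c * x + d) =
      fun x => 6 * a * x + 2 * b := by
  rw [iteratedDeriv_succ, iteratedDeriv_one, deriv_cubic]
  funext x
  have h := (((hasDerivAt_pow 2 x).const_mul (3 * a)).fun_add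
    ((hasDerivAt_id' x).const_mul (2 * b))).add_const c
  rw [h.deriv]
  norm_num
  ring

lemma iteratedDeriv_three_cubic :
    iteratedDeriv 3 (fun x : ℝ => a * x ^ 3 + b * x ^ 2 + c * x + d) = fun _ => 6 * a := by
  rw [iteratedDeriv_succ, iteratedDeriv_two_cubic]
  funext x
  rw [(((hasDerivAt_id' x).const_mul (6 * a)).add_const (2 * b)).deriv, mul_one]

lemma schwarzianNumerator_cubic (x : ℝ) :
    schwarzianNumerator (fun x => a * x ^ 3 + b * x ^ 2 + c * x + d) x =
      -2 * (6 * a * x + 2 * b) ^ 2 - 4 * (b ^ 2 - 3 * a * c) := by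
  rw [schwarzianNumerator, deriv_cubic, iteratedDeriv_two_cubic, iteratedDeriv_three_cubic]
  ring

lemma schwarzianNumerator_cubic_neg (h : 3 * a * c < b ^ 2) (x : ℝ) :
    schwarzianNumerator (fun x => a * x ^ 3 + b * x ^ 2 + c * x + d) x < 0 := by
  rw [schwarzianNumerator_cubic]
  nlinarith [sq_nonneg (6 * a * x + 2 * b)]

end Cubic

theorem ppi_negative_schwarzian_general (q δ : ℝ)
    (hδ : 3 / (1 - q + q ^ 2) < δ)
    (g : ℝ → ℝ)
    (hg : ∀ x : ℝ, g x = x * (1 - δ * (1 - x) * (x - q))) :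
    ∀ x ∈ Set.Icc (0:ℝ) 1,
      2 * deriv g x * iteratedDeriv 3 g x - 3 * (iteratedDeriv 2 g x) ^ 2 < 0 := by
  have hg_cubic : g = fun x => δ * x ^ 3 + -(δ * (1 + q)) * x ^ 2 + (1 + δ * q) * x + 0 :=
    funext fun x => by rw [hg]; ring
  have hpos : 0 < 1 - q + q ^ 2 := by nlinarith [sq_nonneg (q - 1 / 2)]
  have hδ_pos : 0 < δ := (div_pos three_pos hpos).trans hδ
  have hδ_large : 3 < δ * (1 - q + q ^ 2) := (div_lt_iff₀ hpos).mp hδ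
  have hdisc : 3 * δ * (1 + δ * q) < (-(δ * (1 + q))) ^ 2 := by
    nlinarith [mul_pos hδ_pos (sub_pos.mpr hδ_large)]
  intro x _
  subst hg_cubic
  exact schwarzianNumerator_cubic_neg _ _ _ _ hdisc x

/-- Fix `q ∈ (0,1)` and let `g x = x * (1 − δ*(1−x)*(x−q))`.
If `δ > 3/(1 − q + q²)`, then `g` has negative Schwarzian derivative on `[0,1]`:
`2 g'(x) g'''(x) − 3 (g''(x))² < 0` for every `x ∈ [0,1]`. -/
theorem ppi_negative_schwarzian (q δ : ℝ) (hq : q ∈ Set.Ioo (0:ℝ) 1)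
    (hδ : 3 / (1 - q + q ^ 2) < δ)
    (g : ℝ → ℝ)
    (hg : ∀ x : ℝ, g x = x * (1 - δ * (1 - x) * (x - q))) :
    ∀ x ∈ Set.Icc (0:ℝ) 1,
      2 * deriv g x * iteratedDeriv 3 g x - 3 * (iteratedDeriv 2 g x) ^ 2 < 0 :=
  ppi_negative_schwarzian_general q δ hδ g hg
end

section
/- Fix q ∈ (0,1) and δ > 0, and let g(x) = x·(1 − δ·(1−x)·(x−q)). If δ < 3/(1 − q + q²), then g' > 0 on [0,1], so g is strictly increasing on [0,1]. If δ > 3/(1 − q + q²), then g is bimodal: g has exactly two critical points in (0,1), namely c_l = (1+q)/3 − (1/3)·√((δ(1+q)² − 3qδ − 3)/δ) and c_r = (1+q)/3 + (1/3)·√((δ(1+q)² − 3qδ − 3)/δ), with g strictly increasing on [0, c_l], strictly decreasing on [c_l, c_r], and strictly increasing on [c_r, 1]. -/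
/-!
The derivative `3δx² − 2δ(1+q)x + 1 + qδ` is a convex quadratic with vertex at `(1+q)/3`, where
its value is `(3 − δ(1 − q + q²))/3`. Below the threshold this is positive, so `g' > 0` everywhere.
Above it, the quadratic factors as `3δ(x − c_l)(x − c_r)`, and its sign pattern `+, −, +` gives
the three monotonicity intervals; the critical points lie in `(0,1)` because the square root of
the discriminant is less than both `1 + q` and `2 − q`.
-/

open Set

section CubicShape

variable {f : ℝ → ℝ} {a b c : ℝ}

theorem strictMonoOn_Iic_of_hasDerivAt_mul_sub_mul_sub (ha : 0 < a) (hbc : b ≤ c)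
    (hf : ∀ x, HasDerivAt f (a * (x - b) * (x - c)) x) : StrictMonoOn f (Iic b) := by
  refine strictMonoOn_of_deriv_pos (convex_Iic b)
    (continuous_iff_continuousAt.2 fun x => (hf x).continuousAt).continuousOn fun x hx => ?_
  rw [interior_Iic, mem_Iio] at hx
  rw [(hf x).deriv, mul_assoc]
  exact mul_pos ha (mul_pos_of_neg_of_neg (by linarith) (by linarith))

theorem strictAntiOn_Icc_of_hasDerivAt_mul_sub_mul_sub (ha : 0 < a)
    (hf : ∀ x, HasDerivAt f (a * (x - b) * (x - c)) x) : StrictAntiOn f (Icc b c) := by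
  refine strictAntiOn_of_deriv_neg (convex_Icc b c)
    (continuous_iff_continuousAt.2 fun x => (hf x).continuousAt).continuousOn fun x hx => ?_
  rw [interior_Icc, mem_Ioo] at hx
  rw [(hf x).deriv]
  exact mul_neg_of_pos_of_neg (mul_pos ha (by linarith)) (by linarith)

theorem strictMonoOn_Ici_of_hasDerivAt_mul_sub_mul_sub (ha : 0 < a) (hbc : b ≤ c)
    (hf : ∀ x, HasDerivAt f (a * (x - b) * (x - c)) x) : StrictMonoOn f (Ici c) := by
  refine strictMonoOn_of_deriv_pos (convex_Ici c)
    (continuous_iff_continuousAt.2 fun x => (hf x).continuousAt).continuousOn fun x hx => ?_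
  rw [interior_Ici, mem_Ioi] at hx
  rw [(hf x).deriv]
  exact mul_pos (mul_pos ha (by linarith)) (by linarith)

end CubicShape

def ppiMap (q δ x : ℝ) : ℝ := x * (1 - δ * (1 - x) * (x - q))

theorem hasDerivAt_ppiMap (q δ x : ℝ) :
    HasDerivAt (ppiMap q δ) (3 * δ * x ^ 2 - 2 * δ * (1 + q) * x + (1 + q * δ)) x :=
  ((hasDerivAt_id' x).fun_mul ((hasDerivAt_const x 1).fun_sub
    (((hasDerivAt_const x δ).fun_mul ((hasDerivAt_const x 1).fun_sub (hasDerivAt_id' x))).fun_mul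
      ((hasDerivAt_id' x).fun_sub (hasDerivAt_const x q))))).congr_deriv (by ring)

section PPI

variable {q δ : ℝ}

theorem ppiMap_deriv_pos (hδ : 0 ≤ δ) (h : δ * (1 - q + q ^ 2) < 3) (x : ℝ) :
    0 < 3 * δ * x ^ 2 - 2 * δ * (1 + q) * x + (1 + q * δ) := by
  have vertex : 3 * δ * x ^ 2 - 2 * δ * (1 + q) * x + (1 + q * δ) =
      3 * δ * (x - (1 + q) / 3) ^ 2 + (3 - δ * (1 - q + q ^ 2)) / 3 := by ring
  have := sub_pos.2 h
  rw [vertex]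
  positivity

theorem ppiMap_deriv_eq_mul_sub_mul_sub (hδ : δ ≠ 0) {s : ℝ}
    (hs : s ^ 2 = (δ * (1 + q) ^ 2 - 3 * q * δ - 3) / δ) (x : ℝ) :
    3 * δ * x ^ 2 - 2 * δ * (1 + q) * x + (1 + q * δ) =
      3 * δ * (x - ((1 + q) / 3 - 1 / 3 * s)) * (x - ((1 + q) / 3 + 1 / 3 * s)) := by
  have hδs : δ * s ^ 2 = δ * (1 + q) ^ 2 - 3 * q * δ - 3 := by rw [hs]; field_simp
  linear_combination (1 / 3 : ℝ) * hδs

theorem sqrt_ppiDisc_lt_one_add (hq : 0 < q) (hδ : 0 < δ) :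
    √((δ * (1 + q) ^ 2 - 3 * q * δ - 3) / δ) < 1 + q := by
  rw [Real.sqrt_lt' (by linarith), div_lt_iff₀ hδ]
  nlinarith [mul_pos hq hδ]

theorem sqrt_ppiDisc_lt_two_sub (hq : q < 1) (hδ : 0 < δ) :
    √((δ * (1 + q) ^ 2 - 3 * q * δ - 3) / δ) < 2 - q := by
  rw [Real.sqrt_lt' (by linarith), div_lt_iff₀ hδ]
  nlinarith [mul_pos (sub_pos.2 hq) hδ]

end PPI

/-- Fix `q ∈ (0,1)` and `δ > 0`, and let `g x = x * (1 − δ*(1−x)*(x−q))`.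
If `δ < 3/(1 − q + q²)` then `g' > 0` on `[0,1]`, so `g` is strictly increasing
on `[0,1]`.  If `δ > 3/(1 − q + q²)` then `g` is bimodal: it has exactly two
critical points in `(0,1)`, namely
`c_l = (1+q)/3 − (1/3)√((δ(1+q)² − 3qδ − 3)/δ)` and
`c_r = (1+q)/3 + (1/3)√((δ(1+q)² − 3qδ − 3)/δ)`,
with `g` strictly increasing on `[0, c_l]`, strictly decreasing on `[c_l, c_r]`,
and strictly increasing on `[c_r, 1]`. -/
theorem ppi_monotone_or_bimodal (q δ : ℝ) (hq : q ∈ Set.Ioo (0:ℝ) 1) (hδ : 0 < δ)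
    (g : ℝ → ℝ)
    (hg : ∀ x : ℝ, g x = x * (1 - δ * (1 - x) * (x - q))) :
    (δ < 3 / (1 - q + q ^ 2) →
      (∀ x ∈ Set.Icc (0:ℝ) 1, 0 < deriv g x) ∧ StrictMonoOn g (Set.Icc (0:ℝ) 1)) ∧
    (3 / (1 - q + q ^ 2) < δ →
      (1 + q) / 3 - (1 / 3) * Real.sqrt ((δ * (1 + q) ^ 2 - 3 * q * δ - 3) / δ) ∈
        Set.Ioo (0:ℝ) 1 ∧
      (1 + q) / 3 + (1 / 3) * Real.sqrt ((δ * (1 + q) ^ 2 - 3 * q * δ - 3) / δ) ∈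
        Set.Ioo (0:ℝ) 1 ∧
      (1 + q) / 3 - (1 / 3) * Real.sqrt ((δ * (1 + q) ^ 2 - 3 * q * δ - 3) / δ) <
        (1 + q) / 3 + (1 / 3) * Real.sqrt ((δ * (1 + q) ^ 2 - 3 * q * δ - 3) / δ) ∧
      (∀ x ∈ Set.Ioo (0:ℝ) 1, deriv g x = 0 ↔
        (x = (1 + q) / 3 - (1 / 3) * Real.sqrt ((δ * (1 + q) ^ 2 - 3 * q * δ - 3) / δ) ∨
         x = (1 + q) / 3 + (1 / 3) * Real.sqrt ((δ * (1 + q) ^ 2 - 3 * q * δ - 3) / δ))) ∧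
      StrictMonoOn g
        (Set.Icc 0 ((1 + q) / 3 - (1 / 3) * Real.sqrt ((δ * (1 + q) ^ 2 - 3 * q * δ - 3) / δ))) ∧
      StrictAntiOn g
        (Set.Icc ((1 + q) / 3 - (1 / 3) * Real.sqrt ((δ * (1 + q) ^ 2 - 3 * q * δ - 3) / δ))
                 ((1 + q) / 3 + (1 / 3) * Real.sqrt ((δ * (1 + q) ^ 2 - 3 * q * δ - 3) / δ))) ∧
      StrictMonoOn g
        (Set.Icc ((1 + q) / 3 + (1 / 3) * Real.sqrt ((δ * (1 + q) ^ 2 - 3 * q * δ - 3) / δ)) 1)) := by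
  obtain ⟨hq0, hq1⟩ := hq
  have hg' : ∀ x, HasDerivAt g (3 * δ * x ^ 2 - 2 * δ * (1 + q) * x + (1 + q * δ)) x := by
    rw [show g = ppiMap q δ from funext hg]
    exact hasDerivAt_ppiMap q δ
  have hA : 0 < 1 - q + q ^ 2 := by nlinarith [sq_nonneg (2 * q - 1)]
  refine ⟨fun hlt => ?_, fun hgt => ?_⟩
  · have hpos := ppiMap_deriv_pos hδ.le ((lt_div_iff₀ hA).1 hlt)
    exact ⟨fun x _ => (hg' x).deriv ▸ hpos x,
      (strictMono_of_hasDerivAt_pos hg' hpos).strictMonoOn _⟩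
  · have hdisc : 0 < (δ * (1 + q) ^ 2 - 3 * q * δ - 3) / δ :=
      div_pos (by nlinarith [(div_lt_iff₀ hA).1 hgt]) hδ
    have hs₁ := sqrt_ppiDisc_lt_one_add hq0 hδ
    have hs₂ := sqrt_ppiDisc_lt_two_sub hq1 hδ
    have hs₀ := Real.sqrt_pos.2 hdisc
    have hfac := fun x => ppiMap_deriv_eq_mul_sub_mul_sub hδ.ne' (Real.sq_sqrt hdisc.le) x ▸ hg' x
    set s := √((δ * (1 + q) ^ 2 - 3 * q * δ - 3) / δ)
    have hlr : (1 + q) / 3 - 1 / 3 * s < (1 + q) / 3 + 1 / 3 * s := by linarith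
    have ha : 0 < 3 * δ := by positivity
    refine ⟨⟨by linarith, by linarith⟩, ⟨by linarith, by linarith⟩, hlr, fun x _ => ?_,
      (strictMonoOn_Iic_of_hasDerivAt_mul_sub_mul_sub ha hlr.le hfac).mono Icc_subset_Iic_self,
      strictAntiOn_Icc_of_hasDerivAt_mul_sub_mul_sub ha hfac,
      (strictMonoOn_Ici_of_hasDerivAt_mul_sub_mul_sub ha hlr.le hfac).mono Icc_subset_Ici_self⟩
    simp [(hfac x).deriv, ha.ne', sub_eq_zero]
end

section
/- Fix q ∈ ((31 − 12√3)/23, (12√3 − 8)/23) and let δ* = min{4/q², 4/(1−q)²}. Let g_δ(x) = x·(1 − δ·(1−x)·(x−q)). Then there exists δ_q ∈ (0, δ*) such that for every δ ∈ (δ_q, δ*): (i) for every n ≥ 1 the map g_δ has a periodic point of (least) period n, i.e. a point x ∈ [0,1] with g_δⁿ(x) = x and g_δᵏ(x) ≠ x for all 1 ≤ k < n; and (ii) g_δ is Li–Yorke chaotic. -/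
open Filter

/-- A continuous self-map `f` of `[0,1]` is *Li–Yorke chaotic* if there is an
uncountable scrambled set `S ⊆ [0,1]`: for all distinct `x, y ∈ S`,
`liminf_n |fⁿ(x) − fⁿ(y)| = 0` and `limsup_n |fⁿ(x) − fⁿ(y)| > 0`. -/
def LiYorkeChaotic (f : ℝ → ℝ) : Prop :=
  ∃ S : Set ℝ, S ⊆ Set.Icc (0:ℝ) 1 ∧ ¬ S.Countable ∧
    ∀ x ∈ S, ∀ y ∈ S, x ≠ y →
      Filter.liminf (fun n : ℕ => |f^[n] x - f^[n] y|) atTop = 0 ∧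
      0 < Filter.limsup (fun n : ℕ => |f^[n] x - f^[n] y|) atTop

/-!
Instead of going through a point of period 3 and Sharkovsky's theorem, we exhibit a horseshoe.
For `q ≤ 1/2` and `δ (1 - q)² ∈ (199/50, 4)` the intervals `I₀ = [q - 4/25, 4q/5 + 33/100]`,
around the repelling fixed point `q`, and `I₁ = [1/25, 1/5]` form a horseshoe for `g_δ`:
`g_δ(I₀) ⊇ I₀ ∪ I₁` and `g_δ(I₁) ⊇ I₀`, and `g_δ` expands distances from `q` on `I₀`;
the case `q > 1/2` follows from the symmetry `1 - g_{δ,q}(1 - x) = g_{δ,1-q}(x)`.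
Pulling intervals back along an itinerary in which `I₁` is never visited twice in a row
realizes every such itinerary by an orbit, and every periodic one by a periodic orbit;
the itinerary `I₀ I₁ I₀ ⋯ I₀` of length `n` gives a point of least period `n`.
For the scrambled set, write the bits of an arbitrary sequence `β` at the times `4 ^ m`
(each bit infinitely often) and `I₀` elsewhere: orbits of different `β` are in different
pieces infinitely often, while during the runs of `I₀` of length `m` after time `4 ^ m`
expansion forces all orbits to lie within `(11/10)⁻ᵐ` of `q` at time `4 ^ m + 1`.
-/

open Set Filter Topology

def HasPeriodicPointsOfAllPeriods (f : ℝ → ℝ) : Prop :=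
  ∀ n : ℕ, 1 ≤ n → ∃ x ∈ Icc (0 : ℝ) 1, f^[n] x = x ∧ ∀ k : ℕ, 1 ≤ k → k < n → f^[k] x ≠ x

lemma iterate_one_sub_conj (f : ℝ → ℝ) (n : ℕ) (x : ℝ) :
    (fun x => 1 - f (1 - x))^[n] x = 1 - f^[n] (1 - x) := by
  induction n generalizing x with
  | zero => simp
  | succ n ih => rw [Function.iterate_succ_apply, ih, sub_sub_cancel, Function.iterate_succ_apply]

lemma HasPeriodicPointsOfAllPeriods.one_sub_conj {f : ℝ → ℝ}
    (h : HasPeriodicPointsOfAllPeriods f) :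
    HasPeriodicPointsOfAllPeriods fun x => 1 - f (1 - x) := by
  intro n hn
  obtain ⟨x, hx, hper, hmin⟩ := h n hn
  refine ⟨1 - x, ⟨by linarith [hx.2], by linarith [hx.1]⟩, ?_, fun k hk hkn hfix => ?_⟩
  · rw [iterate_one_sub_conj, sub_sub_cancel, hper]
  · rw [iterate_one_sub_conj, sub_sub_cancel, sub_right_inj] at hfix
    exact hmin k hk hkn hfix

lemma LiYorkeChaotic.one_sub_conj {f : ℝ → ℝ} (h : LiYorkeChaotic f) :
    LiYorkeChaotic fun x => 1 - f (1 - x) := by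
  obtain ⟨S, hS, hunc, hscr⟩ := h
  refine ⟨(1 - ·) '' S, ?_, fun hc => hunc ?_, ?_⟩
  · rintro _ ⟨x, hx, rfl⟩
    exact ⟨by linarith [(hS hx).2], by linarith [(hS hx).1]⟩
  · simpa [image_image] using hc.image (1 - ·)
  · rintro _ ⟨x, hx, rfl⟩ _ ⟨y, hy, rfl⟩ hne
    simp only [iterate_one_sub_conj, sub_sub_cancel, sub_sub_sub_cancel_left,
      abs_sub_comm _ (f^[_] x)]
    exact hscr x hx y hy (by rintro rfl; exact hne rfl)

section IntervalMaps

variable {f : ℝ → ℝ}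

lemma exists_Icc_image_eq_of_le (hf : Continuous f) {x₀ x₁ : ℝ} (hx : x₀ ≤ x₁)
    (hfx : f x₀ ≤ f x₁) :
    ∃ u v, x₀ ≤ u ∧ u ≤ v ∧ v ≤ x₁ ∧ f '' Icc u v = Icc (f x₀) (f x₁) := by
  set A := Icc x₀ x₁ ∩ f ⁻¹' {f x₀}
  have hA : IsCompact A := isCompact_Icc.inter_right (isClosed_singleton.preimage hf)
  obtain ⟨⟨hx₀u, hux₁⟩, hfu⟩ : sSup A ∈ A := hA.sSup_mem ⟨x₀, ⟨le_rfl, hx⟩, rfl⟩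
  set u := sSup A
  set B := Icc u x₁ ∩ f ⁻¹' {f x₁}
  have hB : IsCompact B := isCompact_Icc.inter_right (isClosed_singleton.preimage hf)
  obtain ⟨⟨huv, hvx₁⟩, hfv⟩ : sInf B ∈ B := hB.sInf_mem ⟨x₁, ⟨hux₁, le_rfl⟩, rfl⟩
  set v := sInf B
  refine ⟨u, v, hx₀u, huv, hvx₁, Subset.antisymm ?_ ?_⟩
  · -- `u` is the last preimage of `f x₀` and `v` the first preimage of `f x₁` after it,
    -- so leaving `[f x₀, f x₁]` inside `[u, v]` would produce a later or an earlier one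
    rintro _ ⟨x, hx, rfl⟩
    constructor
    · by_contra! hlt
      obtain ⟨y, hy, hfy⟩ := intermediate_value_Icc hx.2 hf.continuousOn ⟨hlt.le, hfv ▸ hfx⟩
      have hyu : y ≤ u := le_csSup hA.bddAbove ⟨⟨by linarith [hy.1, hx.1], by linarith [hy.2]⟩, hfy⟩
      have hxu : x = u := by linarith [hy.1, hx.1]
      exact hlt.ne (hxu ▸ hfu)
    · by_contra! hlt
      obtain ⟨y, hy, hfy⟩ := intermediate_value_Icc hx.1 hf.continuousOn ⟨hfu ▸ hfx, hlt.le⟩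
      have hvy : v ≤ y := csInf_le hB.bddBelow ⟨⟨hy.1, by linarith [hy.2, hx.2]⟩, hfy⟩
      have hxv : x = v := by linarith [hy.2, hx.2]
      exact hlt.ne' (hxv ▸ hfv)
  · exact hfu ▸ hfv ▸ intermediate_value_Icc huv hf.continuousOn

lemma exists_Icc_subset_image_eq (hf : Continuous f) {a b c d : ℝ} (hcd : c ≤ d)
    (h : SurjOn f (Icc a b) (Icc c d)) :
    ∃ u v, u ≤ v ∧ Icc u v ⊆ Icc a b ∧ f '' Icc u v = Icc c d := by
  obtain ⟨x₀, hx₀, rfl⟩ := h (left_mem_Icc.2 hcd)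
  obtain ⟨x₁, hx₁, rfl⟩ := h (right_mem_Icc.2 hcd)
  rcases le_total x₀ x₁ with hx | hx
  · obtain ⟨u, v, hu, huv, hv, himg⟩ := exists_Icc_image_eq_of_le hf hx hcd
    exact ⟨u, v, huv, Icc_subset_Icc (hx₀.1.trans hu) (hv.trans hx₁.2), himg⟩
  · obtain ⟨u, v, hu, huv, hv, himg⟩ := exists_Icc_image_eq_of_le hf.neg hx (neg_le_neg hcd)
    refine ⟨u, v, huv, Icc_subset_Icc (hx₁.1.trans hu) (hv.trans hx₀.2), ?_⟩
    simpa [Set.image_image, image_neg_Icc] using congrArg (Neg.neg '' ·) himg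

end IntervalMaps

lemma liminf_eq_zero_of_tendsto_comp {u : ℕ → ℝ} {φ : ℕ → ℕ} (h₀ : ∀ n, 0 ≤ u n)
    (hbdd : IsBoundedUnder (· ≤ ·) atTop u) (hφ : Tendsto φ atTop atTop)
    (hu : Tendsto (u ∘ φ) atTop (𝓝 0)) : liminf u atTop = 0 := by
  refine le_antisymm (le_of_forall_pos_le_add fun ε hε => ?_)
    (le_liminf_of_le hbdd.isCoboundedUnder_ge (Eventually.of_forall h₀))
  rw [zero_add]
  exact liminf_le_of_frequently_le
    (hφ.frequently_map _ (fun _ h => h) (hu.eventually (ge_mem_nhds hε)).frequently)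
    (isBoundedUnder_of ⟨0, h₀⟩)

/-- An itinerary of the golden mean shift: the symbol `true` is never repeated. -/
def Admissible (T : ℕ → Bool) : Prop := ∀ n, (T n && T (n + 1)) = false

/-- The itinerary coding `β`: the bit `β i` is written at each time `4 ^ m` with
`m.unpair.1 = i`, and `false` everywhere else. -/
def scrambleCode (β : ℕ → Bool) (n : ℕ) : Bool :=
  decide (4 ^ Nat.log 4 n = n) && β (Nat.log 4 n).unpair.1

lemma scrambleCode_four_pow (β : ℕ → Bool) (m : ℕ) : scrambleCode β (4 ^ m) = β m.unpair.1 := by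
  simp [scrambleCode, Nat.log_pow]

lemma scrambleCode_eq_false (β : ℕ → Bool) {m n : ℕ} (h₁ : 4 ^ m < n) (h₂ : n < 4 ^ (m + 1)) :
    scrambleCode β n = false := by
  simp [scrambleCode, Nat.log_eq_of_pow_le_of_lt_pow h₁.le h₂, h₁.ne]

lemma four_pow_add_lt (m : ℕ) {j : ℕ} (hj : j ≤ m) : 4 ^ m + 1 + j < 4 ^ (m + 1) := by
  have : m < 4 ^ m := Nat.lt_pow_self (by norm_num)
  rw [pow_succ]
  omega

lemma admissible_scrambleCode (β : ℕ → Bool) : Admissible (scrambleCode β) := by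
  intro n
  cases h : scrambleCode β n
  · rfl
  · have hn : 4 ^ Nat.log 4 n = n := by simp_all [scrambleCode]
    rw [scrambleCode_eq_false β (m := Nat.log 4 n) (by omega) (by
      have := four_pow_add_lt (Nat.log 4 n) (Nat.zero_le _); omega), Bool.and_false]

lemma scrambleCode_run (β : ℕ → Bool) {m j : ℕ} (hj : j < m) :
    scrambleCode β (4 ^ m + 1 + j) = false :=
  scrambleCode_eq_false β (by omega) (four_pow_add_lt m hj.le)

lemma exists_scrambleCode_ne {β β' : ℕ → Bool} (h : β ≠ β') (N : ℕ) :
    ∃ n ≥ N, scrambleCode β n ≠ scrambleCode β' n := by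
  obtain ⟨i, hi⟩ := Function.ne_iff.1 h
  refine ⟨4 ^ Nat.pair i N, ?_, ?_⟩
  · exact (Nat.right_le_pair i N).trans (Nat.lt_pow_self (by norm_num)).le
  · simpa [scrambleCode_four_pow] using hi

/-- `f` maps the disjoint intervals `[lo false, hi false]`, `[lo true, hi true]` of `[0,1]`
across each other as in the golden mean shift, and expands distances from `p` on the first. -/
structure Horseshoe (f : ℝ → ℝ) where
  lo : Bool → ℝ
  hi : Bool → ℝ
  p : ℝ
  lam : ℝ
  continuous : Continuous f
  lo_le_hi (s : Bool) : lo s ≤ hi s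
  Icc_subset_unit (s : Bool) : Icc (lo s) (hi s) ⊆ Icc 0 1
  separated : hi false < lo true ∨ hi true < lo false
  surjOn (s t : Bool) : (s && t) = false → SurjOn f (Icc (lo s) (hi s)) (Icc (lo t) (hi t))
  p_mem : p ∈ Icc (lo false) (hi false)
  one_lt_lam : 1 < lam
  expands : ∀ x ∈ Icc (lo false) (hi false), lam * |x - p| ≤ |f x - p|

namespace Horseshoe

variable {f : ℝ → ℝ} (H : Horseshoe f)

def piece (s : Bool) : Set ℝ := Icc (H.lo s) (H.hi s)

lemma piece_subset_unit (s : Bool) : H.piece s ⊆ Icc 0 1 := H.Icc_subset_unit s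

def gap : ℝ := max (H.lo true - H.hi false) (H.lo false - H.hi true)

lemma gap_pos : 0 < H.gap := by
  rcases H.separated with h | h
  · exact lt_max_of_lt_left (by linarith)
  · exact lt_max_of_lt_right (by linarith)

lemma gap_le_abs_sub {s t : Bool} (hst : s ≠ t) {x y : ℝ} (hx : x ∈ H.piece s)
    (hy : y ∈ H.piece t) : H.gap ≤ |x - y| := by
  rcases hx with ⟨hx₁, hx₂⟩
  rcases hy with ⟨hy₁, hy₂⟩
  have h₁ := le_abs_self (x - y)
  have h₂ := neg_abs_le (x - y)
  cases s <;> cases t <;> simp only [ne_eq, not_true_eq_false] at hst <;>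
    exact max_le (by linarith) (by linarith)

lemma eq_of_mem_piece {s t : Bool} {x : ℝ} (hs : x ∈ H.piece s) (ht : x ∈ H.piece t) :
    s = t := by
  by_contra hst
  have := H.gap_le_abs_sub hst hs ht
  rw [sub_self, abs_zero] at this
  exact this.not_gt H.gap_pos

lemma exists_Icc_itinerary {T : ℕ → Bool} (hT : Admissible T) (N : ℕ) :
    ∃ u v, u ≤ v ∧ (∀ j ≤ N, MapsTo f^[j] (Icc u v) (H.piece (T j))) ∧
      f^[N] '' Icc u v = H.piece (T N) := by
  induction N generalizing T with
  | zero =>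
    refine ⟨H.lo (T 0), H.hi (T 0), H.lo_le_hi _, fun j hj => ?_, by simp [piece]⟩
    obtain rfl : j = 0 := by omega
    exact mapsTo_id _
  | succ N ih =>
    obtain ⟨u, v, huv, hmaps, himg⟩ := ih (T := fun n => T (n + 1)) fun n => hT (n + 1)
    have hsurj : SurjOn f (H.piece (T 0)) (Icc u v) :=
      fun x hx => H.surjOn _ _ (hT 0) (hmaps 0 N.zero_le hx)
    obtain ⟨u', v', huv', hsub, himg'⟩ := exists_Icc_subset_image_eq H.continuous huv hsurj
    have hf : MapsTo f (Icc u' v') (Icc u v) := himg' ▸ mapsTo_image f _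
    refine ⟨u', v', huv', fun j hj => ?_, ?_⟩
    · cases j with
      | zero => exact hsub
      | succ i => exact (hmaps i (by omega)).comp hf
    · rw [Function.iterate_succ, image_comp, himg', himg]

lemma exists_isPeriodicPt_itinerary {T : ℕ → Bool} (hT : Admissible T) {N : ℕ}
    (hN : T N = T 0) : ∃ x, Function.IsPeriodicPt f N x ∧ ∀ j ≤ N, f^[j] x ∈ H.piece (T j) := by
  obtain ⟨u, v, huv, hmaps, himg⟩ := H.exists_Icc_itinerary hT N
  have hsurj : SurjOn f^[N] (Icc u v) (Icc u v) := by
    rw [SurjOn, himg, hN]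
    exact hmaps 0 N.zero_le
  obtain ⟨x, hx, hfix⟩ :=
    exists_mem_Icc_isFixedPt_of_surjOn (H.continuous.iterate N).continuousOn huv hsurj
  exact ⟨x, hfix, fun j hj => hmaps j hj hx⟩

lemma exists_orbit_itinerary {T : ℕ → Bool} (hT : Admissible T) :
    ∃ x, ∀ n, f^[n] x ∈ H.piece (T n) := by
  set K : ℕ → Set ℝ := fun N => ⋂ j ≤ N, f^[j] ⁻¹' H.piece (T j)
  have hclosed (N : ℕ) : IsClosed (K N) :=
    isClosed_biInter fun j _ => isClosed_Icc.preimage (H.continuous.iterate j)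
  have hne (N : ℕ) : (K N).Nonempty := by
    obtain ⟨u, v, huv, hmaps, -⟩ := H.exists_Icc_itinerary hT N
    exact ⟨u, mem_iInter₂.2 fun j hj => hmaps j hj (left_mem_Icc.2 huv)⟩
  have hanti (N : ℕ) : K (N + 1) ⊆ K N :=
    biInter_subset_biInter_left fun j (hj : j ≤ N) => (by omega : j ≤ N + 1)
  have hK₀ : IsCompact (K 0) :=
    (isCompact_Icc (a := H.lo (T 0)) (b := H.hi (T 0))).of_isClosed_subset (hclosed 0)
      fun x hx => mem_iInter₂.1 hx 0 le_rfl
  obtain ⟨x, hx⟩ :=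
    IsCompact.nonempty_iInter_of_sequence_nonempty_isCompact_isClosed K hanti hne hK₀ hclosed
  exact ⟨x, fun n => mem_iInter₂.1 (mem_iInter.1 hx n) n le_rfl⟩

theorem hasPeriodicPointsOfAllPeriods (H : Horseshoe f) : HasPeriodicPointsOfAllPeriods f := by
  intro n hn
  obtain rfl | hn := hn.eq_or_lt
  · obtain ⟨x, hx, hmem⟩ := H.exists_isPeriodicPt_itinerary (T := fun _ => false)
      (fun _ => rfl) rfl
    exact ⟨x, H.piece_subset_unit _ (hmem 0 zero_le_one), hx, by omega⟩
  -- the orbit of period `n` with itinerary `false true false ⋯ false` returns to `x` at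
  -- time `k` only if it visits `piece true` again at time `k + 1`
  obtain ⟨x, hx, hmem⟩ := H.exists_isPeriodicPt_itinerary (T := fun j => decide (j = 1))
    (N := n) (fun j => by grind) (by grind)
  refine ⟨x, H.piece_subset_unit _ (hmem 0 n.zero_le), hx, fun k hk hkn hfix => ?_⟩
  have h₁ := hmem 1 hn.le
  have h₂ := hmem (k + 1) hkn
  rw [Function.iterate_succ_apply', hfix] at h₂
  have := H.eq_of_mem_piece h₁ h₂
  grind

lemma lam_pos : 0 < H.lam := zero_lt_one.trans H.one_lt_lam

lemma pow_mul_abs_sub_le {z : ℝ} {m : ℕ} (hz : ∀ j < m, f^[j] z ∈ H.piece false) :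
    H.lam ^ m * |z - H.p| ≤ |f^[m] z - H.p| := by
  induction m with
  | zero => simp
  | succ m ih =>
    calc H.lam ^ (m + 1) * |z - H.p| = H.lam * (H.lam ^ m * |z - H.p|) := by ring
      _ ≤ H.lam * |f^[m] z - H.p| :=
        mul_le_mul_of_nonneg_left (ih fun j hj => hz j (by omega)) H.lam_pos.le
      _ ≤ |f^[m + 1] z - H.p| := by
        rw [Function.iterate_succ_apply']
        exact H.expands _ (hz m m.lt_succ_self)

lemma abs_sub_le_inv_pow {z : ℝ} {m : ℕ} (hz : ∀ j < m, f^[j] z ∈ H.piece false)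
    (hm : f^[m] z ∈ Icc 0 1) : |z - H.p| ≤ H.lam⁻¹ ^ m := by
  have hp := H.piece_subset_unit false H.p_mem
  rw [inv_pow, ← one_div, le_div_iff₀' (pow_pos H.lam_pos m)]
  exact (H.pow_mul_abs_sub_le hz).trans (abs_sub_le_of_nonneg_of_le hm.1 hm.2 hp.1 hp.2)

lemma isBoundedUnder_abs_sub {β β' : ℕ → Bool} {x y : ℝ}
    (hx : ∀ n, f^[n] x ∈ H.piece (scrambleCode β n))
    (hy : ∀ n, f^[n] y ∈ H.piece (scrambleCode β' n)) :
    IsBoundedUnder (· ≤ ·) atTop fun n => |f^[n] x - f^[n] y| := by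
  refine isBoundedUnder_of ⟨1, fun n => ?_⟩
  obtain ⟨hx₀, hx₁⟩ := H.piece_subset_unit _ (hx n)
  obtain ⟨hy₀, hy₁⟩ := H.piece_subset_unit _ (hy n)
  exact abs_sub_le_of_nonneg_of_le hx₀ hx₁ hy₀ hy₁

-- both orbits stay near `p` for `m` steps after time `4 ^ m + 1`, so by expansion they
-- were within `lam⁻¹ ^ m` of `p` at that time
lemma liminf_abs_sub_eq_zero {β β' : ℕ → Bool} {x y : ℝ}
    (hx : ∀ n, f^[n] x ∈ H.piece (scrambleCode β n))
    (hy : ∀ n, f^[n] y ∈ H.piece (scrambleCode β' n)) :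
    liminf (fun n => |f^[n] x - f^[n] y|) atTop = 0 := by
  have hnear {γ : ℕ → Bool} {z : ℝ} (hz : ∀ n, f^[n] z ∈ H.piece (scrambleCode γ n)) (m : ℕ) :
      |f^[4 ^ m + 1] z - H.p| ≤ H.lam⁻¹ ^ m := by
    refine H.abs_sub_le_inv_pow (fun j hj => ?_) ?_
    · rw [← Function.iterate_add_apply, add_comm, ← scrambleCode_run γ hj]
      exact hz _
    · rw [← Function.iterate_add_apply]
      exact H.piece_subset_unit _ (hz _)
  have hlam : H.lam⁻¹ < 1 := inv_lt_one_of_one_lt₀ H.one_lt_lam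
  refine liminf_eq_zero_of_tendsto_comp (φ := fun m => 4 ^ m + 1) (fun _ => abs_nonneg _)
    (H.isBoundedUnder_abs_sub hx hy)
    (tendsto_atTop_mono (fun _ => (Nat.lt_pow_self (by norm_num)).le.trans (Nat.le_succ _))
      tendsto_id)
    (squeeze_zero (g := fun m => 2 * H.lam⁻¹ ^ m) (fun _ => abs_nonneg _) (fun m => ?_) (by
      simpa using
        (tendsto_pow_atTop_nhds_zero_of_lt_one (inv_nonneg.2 H.lam_pos.le) hlam).const_mul 2))
  calc |f^[4 ^ m + 1] x - f^[4 ^ m + 1] y|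
      ≤ |f^[4 ^ m + 1] x - H.p| + |f^[4 ^ m + 1] y - H.p| := by
        simpa only [abs_sub_comm H.p] using abs_sub_le _ H.p _
    _ ≤ 2 * H.lam⁻¹ ^ m := by linarith [hnear hx m, hnear hy m]

lemma gap_le_limsup_abs_sub {β β' : ℕ → Bool} (hββ' : β ≠ β') {x y : ℝ}
    (hx : ∀ n, f^[n] x ∈ H.piece (scrambleCode β n))
    (hy : ∀ n, f^[n] y ∈ H.piece (scrambleCode β' n)) :
    H.gap ≤ limsup (fun n => |f^[n] x - f^[n] y|) atTop := by
  refine le_limsup_of_frequently_le (frequently_atTop.2 fun N => ?_)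
    (H.isBoundedUnder_abs_sub hx hy)
  obtain ⟨n, hn, hne⟩ := exists_scrambleCode_ne hββ' N
  exact ⟨n, hn, H.gap_le_abs_sub hne (hx n) (hy n)⟩

theorem liYorkeChaotic (H : Horseshoe f) : LiYorkeChaotic f := by
  choose x hx using fun β => H.exists_orbit_itinerary (admissible_scrambleCode β)
  have hinj : Function.Injective x := fun β β' h => by
    by_contra hne
    obtain ⟨n, -, hn⟩ := exists_scrambleCode_ne hne 0
    exact hn (H.eq_of_mem_piece (hx β n) (h ▸ hx β' n))
  refine ⟨range x, range_subset_iff.2 fun β => H.piece_subset_unit _ (hx β 0), fun hcount => ?_, ?_⟩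
  · have : Countable (ℕ → Bool) := countable_univ_iff.1 <|
      countable_of_injective_of_countable_image hinj.injOn (by rwa [image_univ])
    rw [← Cardinal.mk_le_aleph0_iff] at this
    exact Cardinal.aleph0_lt_continuum.not_ge (by simpa using this)
  · rintro _ ⟨β, rfl⟩ _ ⟨β', rfl⟩ hne
    have hββ' : β ≠ β' := ne_of_apply_ne x hne
    exact ⟨H.liminf_abs_sub_eq_zero (hx β) (hx β'),
      H.gap_pos.trans_le (H.gap_le_limsup_abs_sub hββ' (hx β) (hx β'))⟩

end Horseshoe

def imitationMap (q δ x : ℝ) : ℝ := x * (1 - δ * (1 - x) * (x - q))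

lemma continuous_imitationMap (q δ : ℝ) : Continuous (imitationMap q δ) := by
  unfold imitationMap
  fun_prop

lemma imitationMap_eq_one_sub (q δ : ℝ) :
    imitationMap q δ = fun x => 1 - imitationMap (1 - q) δ (1 - x) := by
  funext x
  unfold imitationMap
  ring

section ImitationHorseshoe

variable {q δ : ℝ}

-- each inequality is monotone in `δ`, so it suffices to check it at an endpoint of
-- `199/50 < δ (1-q)² < 4`, where it is a polynomial inequality on `0.4441 < q ≤ 1/2`
lemma imitationMap_corners (hq₁ : 4441 / 10000 < q) (hq₂ : q ≤ 1 / 2)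
    (hδ₁ : 199 / 50 < δ * (1 - q) ^ 2) (hδ₂ : δ * (1 - q) ^ 2 < 4) :
    4 / 5 * q + 33 / 100 ≤ imitationMap q δ (q - 4 / 25) ∧
      imitationMap q δ (4 / 5 * q + 33 / 100) ≤ 1 / 25 ∧
      imitationMap q δ (1 / 25) ≤ q - 4 / 25 ∧
      4 / 5 * q + 33 / 100 ≤ imitationMap q δ (1 / 5) := by
  have ht : 0 ≤ q - 4441 / 10000 := by linarith
  have hu : 0 ≤ 1 / 2 - q := by linarith
  have hs : 0 < (1 - q) ^ 2 := by nlinarith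
  unfold imitationMap
  refine ⟨?_, ?_, ?_, ?_⟩
  · have hT : 0 ≤ (q - 4 / 25) * (1 - (q - 4 / 25)) * (4 / 25) := by nlinarith
    have hP : (4 / 5 * q + 33 / 100 - (q - 4 / 25)) * (1 - q) ^ 2 ≤
        199 / 50 * ((q - 4 / 25) * (1 - (q - 4 / 25)) * (4 / 25)) := by
      nlinarith [mul_nonneg ht hu]
    nlinarith [mul_le_mul_of_nonneg_right hδ₁.le hT]
  · have hT : 0 ≤ (4 / 5 * q + 33 / 100) * (1 - (4 / 5 * q + 33 / 100)) *
        (4 / 5 * q + 33 / 100 - q) :=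
      mul_nonneg (by nlinarith) (by linarith)
    have hP : (4 / 5 * q + 33 / 100 - 1 / 25) * (1 - q) ^ 2 ≤ 199 / 50 *
        ((4 / 5 * q + 33 / 100) * (1 - (4 / 5 * q + 33 / 100)) * (4 / 5 * q + 33 / 100 - q)) := by
      nlinarith [mul_nonneg ht hu, mul_nonneg (mul_nonneg ht hu) hu,
        mul_nonneg (mul_nonneg ht ht) hu]
    nlinarith [mul_le_mul_of_nonneg_right hδ₁.le hT]
  · have hT : 0 ≤ 1 / 25 * (1 - 1 / 25) * (q - 1 / 25) := by nlinarith
    have hP : 4 * (1 / 25 * (1 - 1 / 25) * (q - 1 / 25)) ≤ (q - 4 / 25 - 1 / 25) * (1 - q) ^ 2 := by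
      nlinarith [mul_nonneg ht hu, mul_nonneg (mul_nonneg ht hu) hu,
        mul_nonneg (mul_nonneg ht ht) hu]
    nlinarith [mul_le_mul_of_nonneg_right hδ₂.le hT]
  · have hT : 0 ≤ 1 / 5 * (1 - 1 / 5) * (q - 1 / 5) := by nlinarith
    have hP : (4 / 5 * q + 33 / 100 - 1 / 5) * (1 - q) ^ 2 ≤
        199 / 50 * (1 / 5 * (1 - 1 / 5) * (q - 1 / 5)) := by
      nlinarith [mul_nonneg ht hu, mul_nonneg (mul_nonneg ht hu) hu,
        mul_nonneg (mul_nonneg ht ht) hu]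
    nlinarith [mul_le_mul_of_nonneg_right hδ₁.le hT]

lemma imitationMap_expands (hq₁ : 4441 / 10000 < q) (hq₂ : q ≤ 1 / 2)
    (hδ₁ : 199 / 50 < δ * (1 - q) ^ 2) {x : ℝ} (hx : x ∈ Icc (q - 4 / 25) (4 / 5 * q + 33 / 100)) :
    11 / 10 * |x - q| ≤ |imitationMap q δ x - q| := by
  have ht : 0 ≤ q - 4441 / 10000 := by linarith
  have hu : 0 ≤ 1 / 2 - q := by linarith
  have hs : 0 < (1 - q) ^ 2 := by nlinarith
  have hT : 0 ≤ x * (1 - x) := by nlinarith [hx.1, hx.2]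
  have hP : 21 / 10 * (1 - q) ^ 2 ≤ 199 / 50 * (x * (1 - x)) := by
    nlinarith [mul_nonneg (sub_nonneg.2 hx.1) (sub_nonneg.2 hx.2), mul_nonneg ht hu,
      mul_nonneg (mul_nonneg ht ht) hu, mul_nonneg (mul_nonneg ht hu) hu]
  have hκ : 21 / 10 ≤ δ * (x * (1 - x)) := by nlinarith [mul_le_mul_of_nonneg_right hδ₁.le hT]
  have hfactor : imitationMap q δ x - q = (x - q) * (1 - δ * (x * (1 - x))) := by
    unfold imitationMap
    ring
  rw [hfactor, abs_mul, abs_of_nonpos (by linarith : 1 - δ * (x * (1 - x)) ≤ 0)]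
  nlinarith [abs_nonneg (x - q)]

noncomputable def imitationHorseshoe (hq₁ : 4441 / 10000 < q) (hq₂ : q ≤ 1 / 2)
    (hδ₁ : 199 / 50 < δ * (1 - q) ^ 2) (hδ₂ : δ * (1 - q) ^ 2 < 4) :
    Horseshoe (imitationMap q δ) where
  lo s := bif s then 1 / 25 else q - 4 / 25
  hi s := bif s then 1 / 5 else 4 / 5 * q + 33 / 100
  p := q
  lam := 11 / 10
  continuous := continuous_imitationMap q δ
  lo_le_hi s := by cases s <;> simp only [cond_false, cond_true] <;> linarith
  Icc_subset_unit s := by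
    cases s <;> simp only [cond_false, cond_true] <;>
      exact Icc_subset_Icc (by linarith) (by linarith)
  separated := Or.inr (by simp only [cond_false, cond_true]; linarith)
  surjOn s t hst := by
    obtain ⟨hA, hB, hC, hD⟩ := imitationMap_corners hq₁ hq₂ hδ₁ hδ₂
    have hg {a b : ℝ} : ContinuousOn (imitationMap q δ) (Icc a b) :=
      (continuous_imitationMap q δ).continuousOn
    cases s <;> cases t <;>
      simp only [cond_false, cond_true, Bool.and_self, Bool.true_eq_false] at hst ⊢
    · exact (Icc_subset_Icc (by linarith) hA).trans (intermediate_value_Icc' (by linarith) hg)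
    · exact (Icc_subset_Icc hB (by linarith)).trans (intermediate_value_Icc' (by linarith) hg)
    · exact (Icc_subset_Icc hC hD).trans (intermediate_value_Icc (by norm_num) hg)
  p_mem := by simp only [cond_false]; constructor <;> linarith
  one_lt_lam := by norm_num
  expands _ hx := imitationMap_expands hq₁ hq₂ hδ₁ hx

end ImitationHorseshoe

lemma lt_of_mem_Ioo_sqrt_three {q : ℝ}
    (hq : q ∈ Ioo ((31 - 12 * Real.sqrt 3) / 23) ((12 * Real.sqrt 3 - 8) / 23)) :
    4441 / 10000 < q ∧ 4441 / 10000 < 1 - q := by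
  have h3 : Real.sqrt 3 < 17320509 / 10000000 := by
    rw [Real.sqrt_lt' (by norm_num)]
    norm_num
  constructor <;> linarith [hq.1, hq.2]

theorem imitationMap_chaotic {q δ : ℝ} (hq₁ : 4441 / 10000 < q) (hq₂ : q ≤ 1 / 2)
    (hδ : δ ∈ Ioo (199 / 200 * (4 / (1 - q) ^ 2)) (4 / (1 - q) ^ 2)) :
    HasPeriodicPointsOfAllPeriods (imitationMap q δ) ∧ LiYorkeChaotic (imitationMap q δ) := by
  have hs : 0 < (1 - q) ^ 2 := by nlinarith
  have hδ₁ : 199 / 50 < δ * (1 - q) ^ 2 := by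
    rw [← div_lt_iff₀ hs]
    linarith [hδ.1, show 199 / 200 * (4 / (1 - q) ^ 2) = 199 / 50 / (1 - q) ^ 2 by ring]
  have hδ₂ : δ * (1 - q) ^ 2 < 4 := (lt_div_iff₀ hs).1 hδ.2
  let H := imitationHorseshoe hq₁ hq₂ hδ₁ hδ₂
  exact ⟨H.hasPeriodicPointsOfAllPeriods, H.liYorkeChaotic⟩

/-- Fix `q ∈ ((31 − 12√3)/23, (12√3 − 8)/23)` and let `δ* = min {4/q², 4/(1−q)²}`,
`g_δ x = x * (1 − δ*(1−x)*(x−q))`.  Then there exists `δ_q ∈ (0, δ*)` such that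
for every `δ ∈ (δ_q, δ*)`:
(i) for every `n ≥ 1` the map `g_δ` has a periodic point of least period `n`;
(ii) `g_δ` is Li–Yorke chaotic. -/
theorem ppi_all_periods_and_LiYorke_chaos (q : ℝ)
    (hq : q ∈ Set.Ioo ((31 - 12 * Real.sqrt 3) / 23) ((12 * Real.sqrt 3 - 8) / 23))
    (g : ℝ → ℝ → ℝ)
    (hg : ∀ δ x : ℝ, g δ x = x * (1 - δ * (1 - x) * (x - q))) :
    ∃ δq ∈ Set.Ioo (0:ℝ) (min (4 / q ^ 2) (4 / (1 - q) ^ 2)),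
      ∀ δ ∈ Set.Ioo δq (min (4 / q ^ 2) (4 / (1 - q) ^ 2)),
        (∀ n : ℕ, 1 ≤ n → ∃ x ∈ Set.Icc (0:ℝ) 1,
          (g δ)^[n] x = x ∧ ∀ k : ℕ, 1 ≤ k → k < n → (g δ)^[k] x ≠ x) ∧
        LiYorkeChaotic (g δ) := by
  obtain ⟨hq₁, hq₁'⟩ := lt_of_mem_Ioo_sqrt_three hq
  have hδ_pos : 0 < min (4 / q ^ 2) (4 / (1 - q) ^ 2) := lt_min (by positivity) (by positivity)
  refine ⟨199 / 200 * min (4 / q ^ 2) (4 / (1 - q) ^ 2), ⟨by positivity, by linarith⟩,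
    fun δ hδ => ?_⟩
  rw [show g δ = imitationMap q δ from funext (hg δ)]
  rcases le_or_gt q (1 / 2) with hq₂ | hq₂
  · rw [min_eq_right (div_le_div_of_nonneg_left (by norm_num) (by positivity) (by nlinarith))] at hδ
    exact imitationMap_chaotic hq₁ hq₂ hδ
  · have hδ' : δ ∈ Ioo (199 / 200 * (4 / (1 - (1 - q)) ^ 2)) (4 / (1 - (1 - q)) ^ 2) := by
      rwa [sub_sub_cancel, ← min_eq_left (b := 4 / (1 - q) ^ 2)
        (div_le_div_of_nonneg_left (by norm_num) (by positivity) (by nlinarith))]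
    rw [imitationMap_eq_one_sub]
    exact (imitationMap_chaotic hq₁' (by linarith) hδ').imp
      HasPeriodicPointsOfAllPeriods.one_sub_conj LiYorkeChaotic.one_sub_conj
end

section
/- Fix q ∈ (1/5, 1/2] and let g(x) = x·(1 − δ·(1−x)·(x−q)). Then the inequality g((1+q)/6) > (1+q)/2 holds if and only if δ·(−(5/36)·(1+q)² + q) > 2, i.e. if and only if δ > 72/(−5q² + 26q − 5). Moreover, for q ∈ (0, 1/5] there is no δ > 0 for which g((1+q)/6) > (1+q)/2 holds, and the threshold 72/(−5q² + 26q − 5) is strictly smaller than δ* = 4/(1−q)² exactly when q > (31 − 12√3)/23. -/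
/-- Fix `q ∈ (1/5, 1/2]` and let `g_{q,δ} x = x * (1 − δ*(1−x)*(x−q))`.  Then:
(i) `g_{q,δ}((1+q)/6) > (1+q)/2` holds iff `δ·(−(5/36)(1+q)² + q) > 2`, iff
`δ > 72/(−5q² + 26q − 5)`;
(ii) for `q' ∈ (0, 1/5]` there is no `δ > 0` for which
`g_{q',δ}((1+q')/6) > (1+q')/2` holds;
(iii) the threshold `72/(−5q² + 26q − 5)` is strictly smaller than
`δ* = 4/(1−q)²` exactly when `q > (31 − 12√3)/23`. -/
theorem ppi_first_period3_condition (q : ℝ) (hq : q ∈ Set.Ioc (1/5:ℝ) (1/2))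
    (g : ℝ → ℝ → ℝ → ℝ)
    (hg : ∀ q' δ x : ℝ, g q' δ x = x * (1 - δ * (1 - x) * (x - q'))) :
    (∀ δ : ℝ,
      ((1 + q) / 2 < g q δ ((1 + q) / 6) ↔ 2 < δ * (-(5 / 36) * (1 + q) ^ 2 + q)) ∧
      ((1 + q) / 2 < g q δ ((1 + q) / 6) ↔ 72 / (-5 * q ^ 2 + 26 * q - 5) < δ)) ∧
    (∀ q' ∈ Set.Ioc (0:ℝ) (1/5), ∀ δ : ℝ, 0 < δ →
      ¬ ((1 + q') / 2 < g q' δ ((1 + q') / 6))) ∧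
    (72 / (-5 * q ^ 2 + 26 * q - 5) < 4 / (1 - q) ^ 2 ↔
      (31 - 12 * Real.sqrt 3) / 23 < q) := by
  obtain ⟨hq1, hq2⟩ := hq
  have h1q : (0:ℝ) < 1 + q := by linarith
  have hD : (0:ℝ) < -5 * q ^ 2 + 26 * q - 5 := by nlinarith
  refine ⟨fun δ => ?_, fun q' hq' δ hδ h => ?_, ?_⟩
  · have key : (1 + q) / 2 < g q δ ((1 + q) / 6) ↔
        2 < δ * (-(5 / 36) * (1 + q) ^ 2 + q) := by
      rw [hg]
      constructor <;> intro h
      · nlinarith [h1q, h]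
      · nlinarith [mul_pos h1q (show (0:ℝ) < δ * (-(5 / 36) * (1 + q) ^ 2 + q) - 2 by linarith)]
    refine ⟨key, key.trans ?_⟩
    rw [div_lt_iff₀ hD]
    constructor <;> intro h <;> nlinarith
  · obtain ⟨h0, h5⟩ := hq'
    rw [hg] at h
    have hD' : δ * (-5 * q' ^ 2 + 26 * q' - 5) ≤ 0 :=
      mul_nonpos_of_nonneg_of_nonpos hδ.le (by nlinarith)
    nlinarith [h, hD', h0, mul_pos hδ h0]
  · have hq3 : (0:ℝ) < (1 - q) ^ 2 := pow_pos (by linarith) 2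
    have hs : Real.sqrt 3 ^ 2 = 3 := Real.sq_sqrt (by norm_num)
    have hs0 : (0:ℝ) < Real.sqrt 3 := Real.sqrt_pos.mpr (by norm_num)
    rw [div_lt_div_iff₀ hD hq3]
    constructor <;> intro h
    · -- 72(1-q)² < 4D  ⇒  q > (31-12√3)/23
      rw [div_lt_iff₀ (by norm_num : (0:ℝ) < 23)]
      nlinarith [hs, hs0, sq_nonneg (12 * Real.sqrt 3 + (31 - 23 * q)), hq2]
    · rw [div_lt_iff₀ (by norm_num : (0:ℝ) < 23)] at h
      nlinarith [hs, hs0, mul_pos (show (0:ℝ) < 12 * Real.sqrt 3 - (31 - 23 * q) by linarith)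
        (show (0:ℝ) < 12 * Real.sqrt 3 + (31 - 23 * q) by nlinarith)]
end

section
/- Fix q ∈ ((31 − 12√3)/23, 1/2] and set δ* = 4/(1−q)². Define F(δ) = (3/256)·(4 − δ·(1−q)²)·(64 − 16·δ·(1−q)² + δ³·(1−q)⁴·(1+q)²), and let g_δ(x) = x·(1 − δ·(1−x)·(x−q)). Then: (i) for every δ ∈ (0, δ*], the inequality g_δ²((1+q)/2) < (1+q)/6 holds if and only if F(δ) < 1; and (ii) there exists a unique δ_q ∈ (0, δ*) such that F(δ) < 1 for all δ ∈ (δ_q, δ*] and F(δ) ≥ 1 for all δ ∈ (0, δ_q]. -/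
/-!
Substituting `t = δ(1-q)²` and `c = ((1+q)/(1-q))²` turns `F` into `(3/256)(4-t)(64-16t+ct³)`,
and the lower bound on `q` says `c > 27/4`. For such `c` this polynomial is at least
`256/3` on `[0,3]`, strictly decreasing on `[3,4]` and zero at `t = 4` (that is, `δ = δ*`), so
`F` crosses the level `1` exactly once, by the intermediate value theorem. Part (i) is the
identity `g_δ²((1+q)/2) = (1+q)/6 · F(δ)`.
-/

open Set

theorem existsUnique_threshold_of_strictAntiOn {f : ℝ → ℝ} {l a b y : ℝ} (hla : l < a)
    (hab : a ≤ b) (hcont : ContinuousOn f (Icc a b)) (hanti : StrictAntiOn f (Icc a b))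
    (hleft : ∀ x ∈ Ioc l a, y ≤ f x) (hb : f b < y) :
    ∃! x, x ∈ Ioo l b ∧ (∀ z ∈ Ioc x b, f z < y) ∧ ∀ z ∈ Ioc l x, y ≤ f z := by
  obtain ⟨x, hx, hfx⟩ : y ∈ f '' Icc a b :=
    intermediate_value_Icc' hab hcont ⟨hb.le, hleft a ⟨hla, le_rfl⟩⟩
  have hxb : x < b := hx.2.lt_of_ne fun h => hb.ne (h ▸ hfx)
  have above : ∀ z ∈ Ioc x b, f z < y := fun z hz =>
    hfx ▸ hanti hx ⟨hx.1.trans hz.1.le, hz.2⟩ hz.1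
  refine ⟨x, ⟨⟨hla.trans_le hx.1, hxb⟩, above, fun z hz => ?_⟩, ?_⟩
  · rcases le_total z a with hza | haz
    · exact hleft z ⟨hz.1, hza⟩
    · exact hfx ▸ hanti.antitoneOn ⟨haz, hz.2.trans hx.2⟩ hx hz.2
  · rintro x' ⟨hx', above', below'⟩
    rcases lt_trichotomy x' x with h | h | h
    · exact absurd hfx (above' x ⟨h, hx.2⟩).ne
    · exact h
    · exact absurd (below' x' ⟨hx'.1, le_rfl⟩) (above x' ⟨h, hx'.2.le⟩).not_ge

def scaledF (c t : ℝ) : ℝ := (4 - t) * (64 - 16 * t + c * t ^ 3)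

theorem scaledF_four (c : ℝ) : scaledF c 4 = 0 := by simp [scaledF]

theorem le_scaledF {c t : ℝ} (hc : 27 / 4 ≤ c) (ht₀ : 0 ≤ t) (ht₃ : t ≤ 3) :
    256 / 3 ≤ scaledF c t := by
  have hmono : scaledF (27 / 4) t ≤ scaledF c t := by
    unfold scaledF
    nlinarith [mul_nonneg (mul_nonneg (pow_nonneg ht₀ 3) (by linarith : (0:ℝ) ≤ 4 - t))
      (by linarith : (0:ℝ) ≤ c - 27 / 4)]
  have hbase : 256 / 3 ≤ scaledF (27 / 4) t := by
    unfold scaledF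
    nlinarith [mul_nonneg (mul_nonneg (pow_nonneg ht₀ 3) (by linarith : (0:ℝ) ≤ 3 - t)) ht₀,
      sq_nonneg (t - 2), sq_nonneg t, mul_nonneg ht₀ (sq_nonneg (t - 2)),
      mul_nonneg (pow_nonneg ht₀ 3) (by linarith : (0:ℝ) ≤ 3 - t)]
  linarith

theorem antitoneOn_pow_three_mul_four_sub :
    AntitoneOn (fun t : ℝ => t ^ 3 * (4 - t)) (Ici 3) := by
  intro s hs t ht hst
  simp only [mem_Ici] at hs ht
  have hbracket : 0 ≤ (s + t) * (s ^ 2 + t ^ 2) - 4 * (s ^ 2 + s * t + t ^ 2) := by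
    nlinarith [mul_nonneg (by linarith : (0:ℝ) ≤ s + t - 6) (add_nonneg (sq_nonneg s) (sq_nonneg t)),
      sq_nonneg (s - t)]
  have hdiff : s ^ 3 * (4 - s) - t ^ 3 * (4 - t) =
      (t - s) * ((s + t) * (s ^ 2 + t ^ 2) - 4 * (s ^ 2 + s * t + t ^ 2)) := by ring
  nlinarith [mul_nonneg (sub_nonneg.mpr hst) hbracket]

theorem strictAntiOn_scaledF {c : ℝ} (hc : 0 ≤ c) : StrictAntiOn (scaledF c) (Icc 3 4) := by
  intro s hs t ht hst
  have hsq : (4 - t) ^ 2 < (4 - s) ^ 2 := by nlinarith [ht.2]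
  have hcube := antitoneOn_pow_three_mul_four_sub (mem_Ici.mpr hs.1) (mem_Ici.mpr ht.1) hst.le
  have h : ∀ u, scaledF c u = 16 * (4 - u) ^ 2 + c * (u ^ 3 * (4 - u)) := fun u => by
    unfold scaledF; ring
  rw [h, h]
  nlinarith [mul_le_mul_of_nonneg_left hcube hc]

theorem twentySeven_div_four_le_sq_div {q : ℝ} (hq : (31 - 12 * √3) / 23 < q) (hq1 : q < 1) :
    27 / 4 ≤ ((1 + q) / (1 - q)) ^ 2 := by
  have h3 : √3 ^ 2 = 3 := Real.sq_sqrt (by norm_num)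
  -- `(31 - 12√3) / 23 = (3√3 - 2) / (3√3 + 2)`, so the hypothesis says `(1+q)/(1-q) > 3√3/2`
  have hratio : 3 * √3 / 2 ≤ (1 + q) / (1 - q) := by
    rw [le_div_iff₀ (by linarith)]
    nlinarith [Real.sqrt_nonneg 3]
  calc (27 / 4 : ℝ) = (3 * √3 / 2) ^ 2 := by rw [div_pow, mul_pow, h3]; norm_num
    _ ≤ _ := pow_le_pow_left₀ (by positivity) hratio 2

theorem iterate_two_midpoint {q δ : ℝ} {g : ℝ → ℝ}
    (hg : ∀ x, g x = x * (1 - δ * (1 - x) * (x - q))) :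
    g^[2] ((1 + q) / 2) = (1 + q) / 6 * ((3 / 256) * (4 - δ * (1 - q) ^ 2) *
      (64 - 16 * δ * (1 - q) ^ 2 + δ ^ 3 * (1 - q) ^ 4 * (1 + q) ^ 2)) := by
  rw [Function.iterate_succ_apply', Function.iterate_one, hg, hg]
  ring

/-- Fix `q ∈ ((31 − 12√3)/23, 1/2]`, set `δ* = 4/(1−q)²`, define
`F(δ) = (3/256)(4 − δ(1−q)²)(64 − 16δ(1−q)² + δ³(1−q)⁴(1+q)²)` and
`g_δ x = x (1 − δ(1−x)(x−q))`.  Then: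
(i) for every `δ ∈ (0, δ*]`, `g_δ²((1+q)/2) < (1+q)/6 ↔ F(δ) < 1`;
(ii) there is a unique `δ_q ∈ (0, δ*)` with `F < 1` on `(δ_q, δ*]` and
`F ≥ 1` on `(0, δ_q]`. -/
theorem ppi_second_period3_condition (q : ℝ)
    (hq : q ∈ Set.Ioc ((31 - 12 * Real.sqrt 3) / 23) (1/2))
    (F : ℝ → ℝ)
    (hF : ∀ δ : ℝ, F δ = (3 / 256) * (4 - δ * (1 - q) ^ 2) *
      (64 - 16 * δ * (1 - q) ^ 2 + δ ^ 3 * (1 - q) ^ 4 * (1 + q) ^ 2))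
    (g : ℝ → ℝ → ℝ)
    (hg : ∀ δ x : ℝ, g δ x = x * (1 - δ * (1 - x) * (x - q))) :
    (∀ δ ∈ Set.Ioc (0:ℝ) (4 / (1 - q) ^ 2),
      ((g δ)^[2] ((1 + q) / 2) < (1 + q) / 6 ↔ F δ < 1)) ∧
    (∃! δq : ℝ, δq ∈ Set.Ioo (0:ℝ) (4 / (1 - q) ^ 2) ∧
      (∀ δ ∈ Set.Ioc δq (4 / (1 - q) ^ 2), F δ < 1) ∧
      (∀ δ ∈ Set.Ioc (0:ℝ) δq, 1 ≤ F δ)) := by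
  obtain ⟨hq₀, hq₁⟩ := hq
  have h1q : 0 < 1 + q := by nlinarith [Real.sq_sqrt (show (0:ℝ) ≤ 3 by norm_num)]
  have hA : 0 < (1 - q) ^ 2 := by nlinarith
  have hc := twentySeven_div_four_le_sq_div hq₀ (by linarith)
  have hFt : ∀ δ, F δ = 3 / 256 * scaledF (((1 + q) / (1 - q)) ^ 2) (δ * (1 - q) ^ 2) := by
    intro δ
    rw [hF, scaledF]
    field_simp
  refine ⟨fun δ _ => ?_, ?_⟩
  · rw [iterate_two_midpoint (hg δ), ← hF]
    exact mul_lt_iff_lt_one_right (by positivity)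
  have hscaled : ∀ {a b δ : ℝ}, δ ∈ Icc (a / (1 - q) ^ 2) (b / (1 - q) ^ 2) →
      δ * (1 - q) ^ 2 ∈ Icc a b := fun h => ⟨(div_le_iff₀ hA).mp h.1, (le_div_iff₀ hA).mp h.2⟩
  apply existsUnique_threshold_of_strictAntiOn (a := 3 / (1 - q) ^ 2) (by positivity)
    (by gcongr; norm_num)
  · rw [funext hF]; fun_prop
  · intro s hs t ht hst
    rw [hFt, hFt]
    gcongr 3 / 256 * ?_
    exact strictAntiOn_scaledF (by positivity) (hscaled hs) (hscaled ht) (by gcongr)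
  · intro δ hδ
    rw [hFt]
    have := le_scaledF hc (mul_nonneg hδ.1.le hA.le) ((le_div_iff₀ hA).mp hδ.2)
    linarith
  · rw [hFt, div_mul_cancel₀ _ hA.ne', scaledF_four]
    norm_num
end

section
/- Fix q ∈ (0,1) and δ > 0, and let h(x) = x / (x + (1−x)·exp(δ·(x−q))) for x ∈ [0,1]. Then: (i) h maps [0,1] into [0,1] and its fixed points are exactly {0, q, 1}; (ii) h'(0) = exp(δ·q) > 1 and h'(1) = exp(δ·(1−q)) > 1, so 0 and 1 are repelling fixed points for every δ > 0; (iii) h'(q) = δ·q² − δ·q + 1, so the fixed point q is attracting when δ < 2/(q·(1−q)) and repelling when δ > 2/(q·(1−q)). -/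
open Filter

/-- A fixed point `p` of a map `f` of the unit interval `[0,1]` is *repelling*
if there is an open neighborhood `U` of `p` (relative to `[0,1]`) such that every
orbit starting in `U \ {p}` eventually leaves `U`. -/
def IsRepellingFixedPt (f : ℝ → ℝ) (p : ℝ) : Prop :=
  ∃ U : Set ℝ, IsOpen U ∧ p ∈ U ∧
    ∀ y ∈ U ∩ Set.Icc (0:ℝ) 1, y ≠ p → ∃ n : ℕ, f^[n] y ∉ U

/-- A fixed point `p` of a map `f` of the unit interval `[0,1]` is *attracting*
if there is an open neighborhood `U` of `p` (relative to `[0,1]`) such that every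
orbit starting in `U` converges to `p`. -/
def IsAttractingFixedPt (f : ℝ → ℝ) (p : ℝ) : Prop :=
  ∃ U : Set ℝ, IsOpen U ∧ p ∈ U ∧
    ∀ y ∈ U ∩ Set.Icc (0:ℝ) 1, Tendsto (fun n : ℕ => f^[n] y) atTop (nhds p)

/-! With `D(x) = x + (1 - x) e^{δ(x-q)}` the denominator, `x D(x) - x = x (1 - x) (e^{δ(x-q)} - 1)`,
so the fixed points are `0`, `1` and the zero `q` of the exponent. Differentiating the quotient gives
`h'(x) = (δx² - δx + 1) e^{δ(x-q)} / D(x)²`, i.e. `e^{δq}`, `e^{δ(1-q)}` and `1 - δq(1-q)` at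
`0`, `1`, `q`. Near a fixed point `p` with `h'(p) = d`, `h` scales distances to `p` by a factor
close to `|d|`; iterating a factor `c < 1` gives attraction, a factor `c > 1` repulsion. -/

open Set Metric Topology Real

section LocalDynamics

variable {f : ℝ → ℝ} {p d c : ℝ}

lemma eventually_abs_sub_le_of_hasDerivAt (hd : HasDerivAt f d p) (hfix : f p = p)
    (hc : |d| < c) : ∀ᶠ y in 𝓝 p, |f y - p| ≤ c * |y - p| := by
  filter_upwards [(hasDerivAt_iff_isLittleO.1 hd).def (sub_pos.2 hc)] with y hy
  rw [hfix, norm_eq_abs, norm_eq_abs, smul_eq_mul] at hy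
  have htri := abs_sub_abs_le_abs_sub (f y - p) ((y - p) * d)
  rw [abs_mul] at htri
  nlinarith [abs_nonneg (y - p)]

lemma eventually_le_abs_sub_of_hasDerivAt (hd : HasDerivAt f d p) (hfix : f p = p)
    (hc : c < |d|) : ∀ᶠ y in 𝓝 p, c * |y - p| ≤ |f y - p| := by
  filter_upwards [(hasDerivAt_iff_isLittleO.1 hd).def (sub_pos.2 hc)] with y hy
  rw [hfix, norm_eq_abs, norm_eq_abs, smul_eq_mul] at hy
  have htri := abs_sub_abs_le_abs_sub ((y - p) * d) (f y - p)
  rw [abs_sub_comm ((y - p) * d), abs_mul] at htri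
  nlinarith [abs_nonneg (y - p)]

theorem isAttractingFixedPt_of_hasDerivAt (hd : HasDerivAt f d p) (hfix : f p = p)
    (hd1 : |d| < 1) : IsAttractingFixedPt f p := by
  obtain ⟨c, hdc, hc1⟩ := exists_between hd1
  have hc0 : 0 ≤ c := (abs_nonneg d).trans hdc.le
  obtain ⟨r, hr, hcontr⟩ := eventually_nhds_iff_ball.1
    (eventually_abs_sub_le_of_hasDerivAt hd hfix hdc)
  have hmaps : MapsTo f (ball p r) (ball p r) := fun y hy => by
    rw [mem_ball, dist_eq] at hy ⊢
    nlinarith [hcontr y (mem_ball.2 (by rwa [dist_eq])), abs_nonneg (y - p)]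
  refine ⟨ball p r, isOpen_ball, mem_ball_self hr, fun y ⟨hy, _⟩ => ?_⟩
  have hiter : ∀ n : ℕ, |f^[n] y - p| ≤ c ^ n * |y - p| := by
    intro n
    induction n with
    | zero => simp
    | succ n ih =>
      rw [Function.iterate_succ_apply', pow_succ', mul_assoc]
      exact (hcontr _ (hmaps.iterate n hy)).trans (mul_le_mul_of_nonneg_left ih hc0)
  rw [tendsto_iff_dist_tendsto_zero]
  refine squeeze_zero (fun _ => dist_nonneg) (fun n => (dist_eq _ _).trans_le (hiter n)) ?_
  simpa using (tendsto_pow_atTop_nhds_zero_of_lt_one hc0 hc1).mul_const |y - p|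

theorem isRepellingFixedPt_of_hasDerivAt (hd : HasDerivAt f d p) (hfix : f p = p)
    (hd1 : 1 < |d|) : IsRepellingFixedPt f p := by
  obtain ⟨c, hc1, hcd⟩ := exists_between hd1
  obtain ⟨r, hr, hexpand⟩ := eventually_nhds_iff_ball.1
    (eventually_le_abs_sub_of_hasDerivAt hd hfix hcd)
  refine ⟨ball p r, isOpen_ball, mem_ball_self hr, fun y _ hyp => ?_⟩
  by_contra! hstay
  have hiter : ∀ n : ℕ, c ^ n * |y - p| ≤ |f^[n] y - p| := by
    intro n
    induction n with
    | zero => simp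
    | succ n ih =>
      rw [Function.iterate_succ_apply', pow_succ', mul_assoc]
      exact (mul_le_mul_of_nonneg_left ih (by linarith)).trans (hexpand _ (hstay n))
  have hy0 : 0 < |y - p| := abs_pos.2 (sub_ne_zero.2 hyp)
  obtain ⟨n, hn⟩ := pow_unbounded_of_one_lt (r / |y - p|) hc1
  have hout : r < |f^[n] y - p| := ((div_lt_iff₀ hy0).1 hn).trans_le (hiter n)
  exact (mem_ball.1 (hstay n)).not_ge (by rw [dist_eq]; exact hout.le)

end LocalDynamics

namespace ExpWeights

variable {δ q x : ℝ}

noncomputable def denom (δ q x : ℝ) : ℝ := x + (1 - x) * exp (δ * (x - q))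

/-- The exponential weights map `f^III_{δ,q}`. -/
noncomputable def map (δ q x : ℝ) : ℝ := x / denom δ q x

lemma denom_pos (hx : x ∈ Icc (0 : ℝ) 1) : 0 < denom δ q x := by
  obtain ⟨hx0, hx1⟩ := hx
  rcases hx0.eq_or_lt with rfl | hx0
  · simpa [denom] using exp_pos _
  · exact add_pos_of_pos_of_nonneg hx0 (mul_nonneg (sub_nonneg.2 hx1) (exp_pos _).le)

lemma mapsTo_map : MapsTo (map δ q) (Icc 0 1) (Icc 0 1) := fun x hx => by
  have hD := denom_pos (δ := δ) (q := q) hx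
  refine ⟨div_nonneg hx.1 hD.le, (div_le_one hD).2 ?_⟩
  exact le_add_of_nonneg_right (mul_nonneg (sub_nonneg.2 hx.2) (exp_pos _).le)

lemma map_eq_self_iff (hδ : δ ≠ 0) (hx : x ∈ Icc (0 : ℝ) 1) :
    map δ q x = x ↔ x = 0 ∨ x = q ∨ x = 1 := by
  have hkey : x * denom δ q x - x = x * (1 - x) * (exp (δ * (x - q)) - 1) := by
    unfold denom; ring
  rw [map, div_eq_iff (denom_pos hx).ne', eq_comm, ← sub_eq_zero, hkey, mul_eq_zero,
    mul_eq_zero, sub_eq_zero, sub_eq_zero, exp_eq_one_iff, mul_eq_zero, sub_eq_zero]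
  simp only [hδ, false_or]
  tauto

lemma fixedPoints_eq (hδ : δ ≠ 0) (hq : q ∈ Icc (0 : ℝ) 1) :
    {x ∈ Icc (0 : ℝ) 1 | map δ q x = x} = {0, q, 1} := by
  ext x
  simp only [mem_ofPred_eq, mem_insert_iff, mem_singleton_iff]
  refine ⟨fun ⟨hx, hfx⟩ => (map_eq_self_iff hδ hx).1 hfx, fun hx => ?_⟩
  have hxI : x ∈ Icc (0 : ℝ) 1 := by
    rcases hx with rfl | rfl | rfl <;> simp [hq]
  exact ⟨hxI, (map_eq_self_iff hδ hxI).2 hx⟩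

lemma hasDerivAt_map (hx : denom δ q x ≠ 0) :
    HasDerivAt (map δ q)
      ((δ * x ^ 2 - δ * x + 1) * exp (δ * (x - q)) / denom δ q x ^ 2) x := by
  have hE : HasDerivAt (fun t => exp (δ * (t - q))) (exp (δ * (x - q)) * δ) x := by
    simpa using (((hasDerivAt_id x).sub_const q).const_mul δ).exp
  have hD : HasDerivAt (denom δ q) (1 + (-1 * exp (δ * (x - q)) +
      (1 - x) * (exp (δ * (x - q)) * δ))) x :=
    (hasDerivAt_id x).add (((hasDerivAt_id x).const_sub 1).mul hE)
  exact ((hasDerivAt_id x).div hD hx).congr_deriv (by unfold denom; simp only [id]; ring)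

lemma hasDerivAt_map_zero : HasDerivAt (map δ q) (exp (δ * q)) 0 := by
  have h0 : denom δ q 0 = exp (-(δ * q)) := by simp [denom]
  convert hasDerivAt_map (h0 ▸ (exp_pos _).ne') using 1
  rw [h0, show δ * (0 - q) = -(δ * q) by ring, exp_neg]
  field_simp
  ring

lemma hasDerivAt_map_one : HasDerivAt (map δ q) (exp (δ * (1 - q))) 1 := by
  convert hasDerivAt_map (δ := δ) (q := q) (x := 1) (by simp [denom]) using 1
  simp [denom]

lemma hasDerivAt_map_self : HasDerivAt (map δ q) (δ * q ^ 2 - δ * q + 1) q := by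
  convert hasDerivAt_map (δ := δ) (q := q) (x := q) (by simp [denom]) using 1
  simp [denom]

@[simp] lemma map_zero : map δ q 0 = 0 := by simp [map]

@[simp] lemma map_one : map δ q 1 = 1 := by simp [map, denom]

@[simp] lemma map_self : map δ q q = q := by simp [map, denom]

end ExpWeights

open ExpWeights in
/-- Fix `q ∈ (0,1)` and `δ > 0`, and let
`h x = x / (x + (1−x) exp(δ(x−q)))` for `x ∈ [0,1]`.  Then:
(i) `h` maps `[0,1]` into `[0,1]` and its fixed points there are exactly
`{0, q, 1}`;
(ii) `h'(0) = exp(δq) > 1` and `h'(1) = exp(δ(1−q)) > 1`, so `0` and `1` are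
repelling for every `δ > 0`;
(iii) `h'(q) = δq² − δq + 1`, so `q` is attracting when `δ < 2/(q(1−q))` and
repelling when `δ > 2/(q(1−q))`. -/
theorem ew_fixedPoints_and_stability (q δ : ℝ) (hq : q ∈ Set.Ioo (0:ℝ) 1) (hδ : 0 < δ)
    (h : ℝ → ℝ)
    (hh : ∀ x : ℝ, h x = x / (x + (1 - x) * Real.exp (δ * (x - q)))) :
    (Set.MapsTo h (Set.Icc (0:ℝ) 1) (Set.Icc (0:ℝ) 1) ∧
     {x ∈ Set.Icc (0:ℝ) 1 | h x = x} = {0, q, 1}) ∧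
    (HasDerivAt h (Real.exp (δ * q)) 0 ∧ 1 < Real.exp (δ * q) ∧
     HasDerivAt h (Real.exp (δ * (1 - q))) 1 ∧ 1 < Real.exp (δ * (1 - q)) ∧
     IsRepellingFixedPt h 0 ∧ IsRepellingFixedPt h 1) ∧
    (HasDerivAt h (δ * q ^ 2 - δ * q + 1) q ∧
     (δ < 2 / (q * (1 - q)) → IsAttractingFixedPt h q) ∧
     (2 / (q * (1 - q)) < δ → IsRepellingFixedPt h q)) := by
  obtain rfl : h = map δ q := funext hh
  have hexp0 : 1 < exp (δ * q) := one_lt_exp_iff.2 (mul_pos hδ hq.1)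
  have hexp1 : 1 < exp (δ * (1 - q)) := one_lt_exp_iff.2 (mul_pos hδ (sub_pos.2 hq.2))
  have hvar : 0 < q * (1 - q) := mul_pos hq.1 (sub_pos.2 hq.2)
  have hdq : δ * q ^ 2 - δ * q + 1 = 1 - δ * (q * (1 - q)) := by ring
  refine ⟨⟨mapsTo_map, fixedPoints_eq hδ.ne' (Ioo_subset_Icc_self hq)⟩,
    ⟨hasDerivAt_map_zero, hexp0, hasDerivAt_map_one, hexp1, ?_, ?_⟩,
    ⟨hasDerivAt_map_self, fun hlt => ?_, fun hgt => ?_⟩⟩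
  · exact isRepellingFixedPt_of_hasDerivAt hasDerivAt_map_zero map_zero
      (by rwa [abs_of_pos (exp_pos _)])
  · exact isRepellingFixedPt_of_hasDerivAt hasDerivAt_map_one map_one
      (by rwa [abs_of_pos (exp_pos _)])
  · have hsmall := (lt_div_iff₀ hvar).1 hlt
    refine isAttractingFixedPt_of_hasDerivAt hasDerivAt_map_self map_self ?_
    rw [hdq, abs_sub_lt_iff]
    constructor <;> nlinarith
  · have hlarge := (div_lt_iff₀ hvar).1 hgt
    refine isRepellingFixedPt_of_hasDerivAt hasDerivAt_map_self map_self ?_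
    rw [hdq]
    exact lt_abs.2 (Or.inr (by linarith))
end

section
/- Fix q ∈ (0,1) and let h(x) = x / (x + (1−x)·exp(δ·(x−q))). If 0 < δ ≤ 2/(q·(1−q)), then for every x ∈ (0,1) the orbit of x under h converges to q, i.e. lim_{n→∞} hⁿ(x) = q. -/
open Filter Set

private lemma pade_log {s : ℝ} (h0 : 0 < s) (h1 : s < 1) :
    2 * s < Real.log (1 + s) - Real.log (1 - s) := by
  have key : StrictMonoOn (fun u : ℝ => Real.log (1 + u) - Real.log (1 - u) - 2 * u)
      (Set.Ico (0:ℝ) 1) := by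
    apply strictMonoOn_of_deriv_pos (convex_Ico 0 1)
    · apply ContinuousOn.sub
      apply ContinuousOn.sub
      · exact ContinuousOn.log (by fun_prop) (fun u hu => by
          have := hu.1; have := hu.2; simp only [Set.mem_Ico] at hu; positivity)
      · exact ContinuousOn.log (by fun_prop) (fun u hu => by
          simp only [Set.mem_Ico] at hu; have : 0 < 1 - u := by linarith [hu.2]
          positivity)
      · fun_prop
    · intro u hu
      rw [interior_Ico] at hu
      obtain ⟨hu0, hu1⟩ := hu
      have h1u : (0:ℝ) < 1 + u := by linarith
      have h1u' : (0:ℝ) < 1 - u := by linarith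
      have d1 : HasDerivAt (fun u : ℝ => Real.log (1 + u)) (1 / (1 + u)) u := by
        simpa using (HasDerivAt.log ((hasDerivAt_id u).const_add 1) (ne_of_gt h1u))
      have d2 : HasDerivAt (fun u : ℝ => Real.log (1 - u)) (-1 / (1 - u)) u := by
        simpa using (HasDerivAt.log ((hasDerivAt_id u).const_sub 1) (ne_of_gt h1u'))
      have d3 : HasDerivAt (fun u : ℝ => Real.log (1 + u) - Real.log (1 - u) - 2 * u)
          (1 / (1 + u) - -1 / (1 - u) - 2 * 1) u := by
        exact (d1.sub d2).sub ((hasDerivAt_id u).const_mul 2)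
      rw [d3.deriv]
      have expand : 1 / (1 + u) - -1 / (1 - u) - 2 * 1 = 2 * u ^ 2 / ((1 + u) * (1 - u)) := by
        field_simp
        ring
      rw [expand]
      positivity
  have := key (Set.left_mem_Ico.2 one_pos) ⟨le_of_lt h0, h1⟩ h0
  simp only [Real.log_one, add_zero, sub_zero, mul_zero] at this
  norm_num at this
  linarith
private lemma pade_c {c t : ℝ} (hc : 0 < c) (ht : 0 < t) (htc : t < c) :
    2 * t / c < Real.log (c + t) - Real.log (c - t) := by
  have h0 : 0 < t / c := div_pos ht hc
  have h1 : t / c < 1 := (div_lt_one hc).2 htc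
  have key := pade_log h0 h1
  have e1 : (1 : ℝ) + t / c = (c + t) / c := by field_simp
  have e2 : (1 : ℝ) - t / c = (c - t) / c := by field_simp
  have hct : (0:ℝ) < c - t := by linarith
  rw [e1, e2, Real.log_div (by linarith) (ne_of_gt hc),
    Real.log_div (ne_of_gt hct) (ne_of_gt hc)] at key
  have : 2 * t / c = 2 * (t / c) := by ring
  linarith

private lemma logit_gap {q δ t : ℝ} (hq0 : 0 < q) (hq1 : q < 1)
    (hδ : δ ≤ 2 / (q * (1 - q))) (ht : 0 < t) (htq : t < q) (ht1 : t < 1 - q) :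
    δ * t < Real.log (((q + t) * (1 - q + t)) / ((q - t) * (1 - q - t))) := by
  have hq1' : (0:ℝ) < 1 - q := by linarith
  have p1 := pade_c hq0 ht htq
  have p2 := pade_c hq1' ht ht1
  have hδt : δ * t ≤ 2 * t / q + 2 * t / (1 - q) := by
    have := mul_le_mul_of_nonneg_right hδ (le_of_lt ht)
    calc δ * t ≤ 2 / (q * (1 - q)) * t := this
      _ = 2 * t / q + 2 * t / (1 - q) := by
          rw [div_add_div _ _ (ne_of_gt hq0) (ne_of_gt hq1'), div_mul_eq_mul_div, div_eq_div_iff (by positivity) (by positivity)]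
          ring
  have hqt : (0:ℝ) < q - t := by linarith
  have hqt1 : (0:ℝ) < 1 - q - t := by linarith
  have hsplit : Real.log (((q + t) * (1 - q + t)) / ((q - t) * (1 - q - t)))
      = (Real.log (q + t) - Real.log (q - t)) + (Real.log (1 - q + t) - Real.log (1 - q - t)) := by
    rw [Real.log_div (by positivity) (by positivity), Real.log_mul (by positivity) (by positivity),
      Real.log_mul (ne_of_gt hqt) (ne_of_gt hqt1)]
    ring
  rw [hsplit]
  linarith

private lemma step_bound {q δ : ℝ} (hq0 : 0 < q) (hq1 : q < 1) (hδ0 : 0 < δ)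
    (hδ : δ ≤ 2 / (q * (1 - q))) {x : ℝ} (hx0 : 0 < x) (hx1 : x < 1) :
    x / (x + (1 - x) * Real.exp (δ * (x - q))) ∈ Set.Ioo (0:ℝ) 1 ∧
    (x ≠ q → |x / (x + (1 - x) * Real.exp (δ * (x - q))) - q| < |x - q|) := by
  set E := Real.exp (δ * (x - q)) with hE
  have hEpos : 0 < E := Real.exp_pos _
  have hx1' : (0:ℝ) < 1 - x := by linarith
  have hD : 0 < x + (1 - x) * E := by positivity
  set D := x + (1 - x) * E with hDdef
  constructor
  · constructor
    · positivity
    · rw [div_lt_one hD]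
      nlinarith [mul_pos hx1' hEpos]
  intro hxq
  rcases lt_trichotomy x q with hlt | heq | hgt
  · -- x < q
    have ht : 0 < q - x := by linarith
    have hE1 : E < 1 := by
      rw [hE]
      apply Real.exp_lt_one_iff.2
      nlinarith
    have low : x < x / D := by
      rw [lt_div_iff₀ hD]
      nlinarith [mul_pos hx1' (sub_pos.2 hE1)]
    have up : x / D < 2 * q - x := by
      by_cases hb : 2 * q - x < 1
      · -- use logit_gap with t = q - x
        have hgap := logit_gap hq0 hq1 hδ ht (by linarith) (by linarith)
        set t := q - x with htdef
        have e1 : (q + t) * (1 - q + t) = (2 * q - x) * (1 - x) := by rw [htdef]; ring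
        have e2 : (q - t) * (1 - q - t) = x * (1 - (2 * q - x)) := by rw [htdef]; ring
        rw [e1, e2] at hgap
        have hbpos : 0 < 2 * q - x := by linarith
        have h1b : 0 < 1 - (2 * q - x) := by linarith
        -- from hgap : δ * t < log ((2q-x)(1-x) / (x(1-(2q-x))))
        have hC : 0 < x * (1 - (2 * q - x)) / ((2 * q - x) * (1 - x)) := by positivity
        have hlogC : Real.log (x * (1 - (2 * q - x)) / ((2 * q - x) * (1 - x))) < δ * (x - q) := by
          rw [Real.log_div (by positivity) (by positivity)] at hgap ⊢
          have : δ * (x - q) = -(δ * t) := by rw [htdef]; ring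
          rw [this]
          linarith
        have hCE : x * (1 - (2 * q - x)) / ((2 * q - x) * (1 - x)) < E := by
          rw [hE]
          exact (Real.log_lt_iff_lt_exp hC).1 hlogC
        rw [div_lt_iff₀ hD]
        have h2 : x * (1 - (2 * q - x)) < (2 * q - x) * (1 - x) * E := by
          rw [div_lt_iff₀ (by positivity)] at hCE
          linarith
        nlinarith
      · have : x / D < 1 := by rw [div_lt_one hD]; nlinarith [mul_pos hx1' hEpos]
        linarith
    rw [abs_of_neg (by linarith : x - q < 0), abs_lt]
    constructor <;> [linarith; linarith]
  · exact absurd heq hxq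
  · -- q < x
    have ht : 0 < x - q := by linarith
    have hE1 : 1 < E := by
      rw [hE]
      apply Real.one_lt_exp_iff.2
      nlinarith
    have up : x / D < x := by
      rw [div_lt_iff₀ hD]
      nlinarith [mul_pos hx1' (sub_pos.2 hE1)]
    have low : 2 * q - x < x / D := by
      by_cases ha : 0 < 2 * q - x
      · have hgap := logit_gap hq0 hq1 hδ ht (by linarith) (by linarith)
        set t := x - q with htdef
        have e1 : (q + t) * (1 - q + t) = x * (1 - (2 * q - x)) := by rw [htdef]; ring
        have e2 : (q - t) * (1 - q - t) = (2 * q - x) * (1 - x) := by rw [htdef]; ring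
        rw [e1, e2] at hgap
        have h1a : 0 < 1 - (2 * q - x) := by linarith
        have hC : 0 < x * (1 - (2 * q - x)) / ((2 * q - x) * (1 - x)) := by positivity
        have hEC : E < x * (1 - (2 * q - x)) / ((2 * q - x) * (1 - x)) := by
          rw [hE]
          apply (Real.lt_log_iff_exp_lt hC).1
          have : δ * (x - q) = δ * t := by rw [htdef]
          rw [this]
          exact hgap
        rw [lt_div_iff₀ hD]
        have h2 : (2 * q - x) * (1 - x) * E < x * (1 - (2 * q - x)) := by
          rw [lt_div_iff₀ (by positivity)] at hEC
          linarith
        nlinarith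
      · have : 0 < x / D := by positivity
        linarith
    rw [abs_of_pos (by linarith : 0 < x - q), abs_lt]
    constructor <;> [linarith; linarith]
/-- Fix `q ∈ (0,1)` and let `h x = x / (x + (1−x) exp(δ(x−q)))`.
If `0 < δ ≤ 2/(q(1−q))`, then for every `x ∈ (0,1)` the orbit of `x` under `h`
converges to `q`. -/
theorem ew_convergence_small_step (q δ : ℝ) (hq : q ∈ Set.Ioo (0:ℝ) 1)
    (hδ0 : 0 < δ) (hδ : δ ≤ 2 / (q * (1 - q)))
    (h : ℝ → ℝ)
    (hh : ∀ x : ℝ, h x = x / (x + (1 - x) * Real.exp (δ * (x - q)))) :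
    ∀ x ∈ Set.Ioo (0:ℝ) 1,
      Tendsto (fun n : ℕ => h^[n] x) atTop (nhds q) := by
  obtain ⟨hq0, hq1⟩ := hq
  intro x hx
  -- fixed point
  have hfix : h q = q := by
    rw [hh]
    simp [sub_self, Real.exp_zero]
  -- invariance and decrease
  have hmem : ∀ y ∈ Set.Ioo (0:ℝ) 1, h y ∈ Set.Ioo (0:ℝ) 1 := by
    intro y hy
    rw [hh]
    exact (step_bound hq0 hq1 hδ0 hδ hy.1 hy.2).1
  have hdec : ∀ y ∈ Set.Ioo (0:ℝ) 1, y ≠ q → |h y - q| < |y - q| := by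
    intro y hy hyq
    rw [hh]
    exact (step_bound hq0 hq1 hδ0 hδ hy.1 hy.2).2 hyq
  have hinv : ∀ n : ℕ, h^[n] x ∈ Set.Ioo (0:ℝ) 1 := by
    intro n
    induction n with
    | zero => simpa using hx
    | succ n ih => rw [Function.iterate_succ_apply']; exact hmem _ ih
  set d : ℕ → ℝ := fun n => |h^[n] x - q| with hd
  have hanti : Antitone d := by
    apply antitone_nat_of_succ_le
    intro n
    simp only [hd, Function.iterate_succ_apply']
    by_cases hyq : h^[n] x = q
    · rw [hyq, hfix]
    · exact le_of_lt (hdec _ (hinv n) hyq)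
  have hbdd : BddBelow (Set.range d) := ⟨0, by rintro _ ⟨n, rfl⟩; exact abs_nonneg _⟩
  set c := ⨅ n, d n with hc
  have hdc : Tendsto d atTop (nhds c) := tendsto_atTop_ciInf hanti hbdd
  have hcle : ∀ n, c ≤ d n := fun n => ciInf_le hbdd n
  have hc0 : 0 ≤ c := le_ciInf (fun n => abs_nonneg _)
  have hczero : c = 0 := by
    by_contra hcne
    have hcpos : 0 < c := lt_of_le_of_ne hc0 (Ne.symm hcne)
    obtain ⟨L, hL, φ, hφ, hLt⟩ := isCompact_Icc.tendsto_subseq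
      (x := fun n => h^[n] x) (fun n => ⟨(hinv n).1.le, (hinv n).2.le⟩ : ∀ n, h^[n] x ∈ Set.Icc (0:ℝ) 1)
    have hdφ : Tendsto (d ∘ φ) atTop (nhds c) := hdc.comp hφ.tendsto_atTop
    have hdφ' : Tendsto (d ∘ φ) atTop (nhds (|L - q|)) := by
      have := (hLt.sub_const q).abs
      exact this
    have hLq : |L - q| = c := tendsto_nhds_unique hdφ' hdφ
    -- L ≠ 0
    have hL0 : L ≠ 0 := by
      intro h0
      rw [h0] at hLq
      have hcq : c = q := by rw [← hLq, abs_of_neg (by linarith : (0:ℝ) - q < 0)]; ring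
      have hge : ∀ n, 2 * q ≤ h^[n] x := by
        intro n
        have := hcle n
        rw [hcq] at this
        rcases le_abs.1 this with h1 | h1
        · linarith
        · exfalso; have := (hinv n).1; linarith
      have : 2 * q ≤ L := ge_of_tendsto hLt (Eventually.of_forall (fun k => hge (φ k)))
      rw [h0] at this; linarith
    have hL1 : L ≠ 1 := by
      intro h1
      rw [h1] at hLq
      have hcq : c = 1 - q := by rw [← hLq, abs_of_pos (by linarith : (0:ℝ) < 1 - q)]
      have hge : ∀ n, h^[n] x ≤ 2 * q - 1 := by
        intro n
        have := hcle n
        rw [hcq] at this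
        rcases le_abs.1 this with h2 | h2
        · exfalso; have := (hinv n).2; linarith
        · linarith
      have : L ≤ 2 * q - 1 := le_of_tendsto hLt (Eventually.of_forall (fun k => hge (φ k)))
      rw [h1] at this; linarith
    have hLmem : L ∈ Set.Ioo (0:ℝ) 1 :=
      ⟨lt_of_le_of_ne hL.1 (Ne.symm hL0), lt_of_le_of_ne hL.2 hL1⟩
    have hLne : L ≠ q := by
      intro hLq'
      rw [hLq', sub_self, abs_zero] at hLq
      exact hcne hLq.symm
    -- continuity of h at L
    have hcont : ContinuousAt h L := by
      have hfun : h = fun y => y / (y + (1 - y) * Real.exp (δ * (y - q))) := funext hh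
      rw [hfun]
      have hDL : L + (1 - L) * Real.exp (δ * (L - q)) ≠ 0 := by
        have : 0 < L + (1 - L) * Real.exp (δ * (L - q)) := by
          have := hLmem.1; have := hLmem.2
          have := Real.exp_pos (δ * (L - q))
          nlinarith
        exact ne_of_gt this
      exact ContinuousAt.div (by fun_prop) (by fun_prop) hDL
    have hnext : Tendsto (fun k => h^[φ k + 1] x) atTop (nhds (h L)) := by
      have h2 : (fun k => h^[φ k + 1] x) = h ∘ ((fun n => h^[n] x) ∘ φ) := by
        funext k
        simp [Function.comp, Function.iterate_succ_apply']
      rw [h2]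
      exact hcont.tendsto.comp hLt
    have hdnext : Tendsto (fun k => d (φ k + 1)) atTop (nhds (|h L - q|)) :=
      (hnext.sub_const q).abs
    have hψ : StrictMono (fun k => φ k + 1) := fun a b hab => by
      simp only [add_lt_add_iff_right]; exact hφ hab
    have hdnext' : Tendsto (fun k => d (φ k + 1)) atTop (nhds c) :=
      hdc.comp hψ.tendsto_atTop
    have heq : |h L - q| = c := tendsto_nhds_unique hdnext hdnext'
    have hlt : |h L - q| < |L - q| := hdec L hLmem hLne
    rw [heq, hLq] at hlt
    exact lt_irrefl c hlt
  rw [tendsto_iff_dist_tendsto_zero]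
  have : ∀ n, dist (h^[n] x) q = d n := fun n => by rw [Real.dist_eq]
  simp only [this]
  rw [← hczero]
  exact hdc
end
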